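/- arXiv:2510.23599 — 7 statements merged into one kernel-verified Lean document; each statement's English description precedes it below -/
import Mathlib

section
/- Let f : ℝ² → [0,∞] be measurable and let K ≥ 1 satisfy f(x + a) ≤ K·f(x) for every x ∈ ℝ² and every a ∈ [−1,1]². Then (1/K)·∫_{ℝ²} f ≤ Σ_{n∈ℤ²} f(n) ≤ K·∫_{ℝ²} f, as inequalities in [0,∞]. -/
open MeasureTheory

/-- If `f : ℝ² → [0,∞]` is measurable, `K ≥ 1`, and
`f(x + a) ≤ K·f(x)` for all `x ∈ ℝ²` and all `a ∈ [−1,1]²`, then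
`(1/K)·∫_{ℝ²} f ≤ Σ_{n∈ℤ²} f(n) ≤ K·∫_{ℝ²} f` in `[0,∞]`. -/
theorem stmt_1 (f : ℝ × ℝ → ENNReal) (hf : Measurable f) (K : ℝ) (hK : 1 ≤ K)
    (hslow : ∀ x : ℝ × ℝ, ∀ a : ℝ × ℝ,
      a ∈ Set.Icc ((-1 : ℝ), (-1 : ℝ)) ((1 : ℝ), (1 : ℝ)) →
      f (x + a) ≤ ENNReal.ofReal K * f x) :
    (∫⁻ x, f x) / ENNReal.ofReal K ≤ (∑' n : ℤ × ℤ, f ((n.1 : ℝ), (n.2 : ℝ))) ∧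
      (∑' n : ℤ × ℤ, f ((n.1 : ℝ), (n.2 : ℝ))) ≤ ENNReal.ofReal K * ∫⁻ x, f x := by
  set K' : ENNReal := ENNReal.ofReal K with hK'
  set Q : ℤ × ℤ → Set (ℝ × ℝ) :=
    fun n => Set.Ico (n.1 : ℝ) (n.1 + 1) ×ˢ Set.Ico (n.2 : ℝ) (n.2 + 1) with hQdef
  have hmeas : ∀ n, MeasurableSet (Q n) :=
    fun n => measurableSet_Ico.prod measurableSet_Ico
  have hfloor : ∀ (n : ℤ × ℤ) (x : ℝ × ℝ), x ∈ Q n → (⌊x.1⌋, ⌊x.2⌋) = n := by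
    rintro ⟨n1, n2⟩ ⟨x1, x2⟩ ⟨⟨h1, h2⟩, ⟨h3, h4⟩⟩
    simp only [Prod.mk.injEq]
    constructor
    · exact Int.floor_eq_iff.2 ⟨h1, by exact_mod_cast h2⟩
    · exact Int.floor_eq_iff.2 ⟨h3, by exact_mod_cast h4⟩
  have hdisj : Pairwise (Function.onFun Disjoint Q) := by
    intro n m hnm
    rw [Function.onFun, Set.disjoint_left]
    intro x hxn hxm
    exact hnm ((hfloor n x hxn).symm.trans (hfloor m x hxm))
  have hunion : (⋃ n, Q n) = Set.univ := by
    ext x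
    simp only [Set.mem_iUnion, Set.mem_univ, iff_true]
    refine ⟨(⌊x.1⌋, ⌊x.2⌋), ⟨⟨Int.floor_le _, ?_⟩, ⟨Int.floor_le _, ?_⟩⟩⟩
    · push_cast; exact Int.lt_floor_add_one _
    · push_cast; exact Int.lt_floor_add_one _
  have hvol : ∀ n, volume (Q n) = 1 := by
    intro n
    rw [hQdef]
    simp only [MeasureTheory.Measure.volume_eq_prod, Measure.prod_prod, Real.volume_Ico]
    simp
  have hsplit : (∫⁻ x, f x) = ∑' n : ℤ × ℤ, ∫⁻ x in Q n, f x := by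
    rw [← setLIntegral_univ, ← hunion, lintegral_iUnion hmeas hdisj]
  -- For x ∈ Q n, f x ≤ K' * f n and f n ≤ K' * f x
  have hmem1 : ∀ (n : ℤ × ℤ) (x : ℝ × ℝ), x ∈ Q n →
      x - ((n.1 : ℝ), (n.2 : ℝ)) ∈ Set.Icc ((-1 : ℝ), (-1 : ℝ)) ((1 : ℝ), (1 : ℝ)) := by
    rintro ⟨n1, n2⟩ ⟨x1, x2⟩ ⟨⟨h1, h2⟩, ⟨h3, h4⟩⟩
    constructor <;> constructor <;> simp <;> linarith
  have hmem2 : ∀ (n : ℤ × ℤ) (x : ℝ × ℝ), x ∈ Q n →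
      ((n.1 : ℝ), (n.2 : ℝ)) - x ∈ Set.Icc ((-1 : ℝ), (-1 : ℝ)) ((1 : ℝ), (1 : ℝ)) := by
    rintro ⟨n1, n2⟩ ⟨x1, x2⟩ ⟨⟨h1, h2⟩, ⟨h3, h4⟩⟩
    constructor <;> constructor <;> simp <;> linarith
  have hub : ∀ n : ℤ × ℤ, (∫⁻ x in Q n, f x) ≤ K' * f ((n.1 : ℝ), (n.2 : ℝ)) := by
    intro n
    have : (∫⁻ x in Q n, f x) ≤ ∫⁻ _ in Q n, K' * f ((n.1 : ℝ), (n.2 : ℝ)) := by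
      refine setLIntegral_mono measurable_const fun x hx => ?_
      have := hslow ((n.1 : ℝ), (n.2 : ℝ)) (x - ((n.1 : ℝ), (n.2 : ℝ))) (hmem1 n x hx)
      simpa using this
    calc (∫⁻ x in Q n, f x) ≤ _ := this
      _ = K' * f ((n.1 : ℝ), (n.2 : ℝ)) := by
          rw [setLIntegral_const, hvol n, mul_one]
  have hlb : ∀ n : ℤ × ℤ, f ((n.1 : ℝ), (n.2 : ℝ)) ≤ K' * ∫⁻ x in Q n, f x := by
    intro n
    have h1 : f ((n.1 : ℝ), (n.2 : ℝ)) = ∫⁻ _ in Q n, f ((n.1 : ℝ), (n.2 : ℝ)) := by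
      rw [setLIntegral_const, hvol n, mul_one]
    rw [h1]
    have h2 : (∫⁻ _ in Q n, f ((n.1 : ℝ), (n.2 : ℝ))) ≤ ∫⁻ x in Q n, K' * f x := by
      refine setLIntegral_mono (measurable_const.mul hf) fun x hx => ?_
      have := hslow x (((n.1 : ℝ), (n.2 : ℝ)) - x) (hmem2 n x hx)
      simpa using this
    rw [lintegral_const_mul _ hf] at h2
    exact h2
  have hKne : K' ≠ 0 := by
    simp [hK', ENNReal.ofReal_pos]; linarith
  constructor
  · refine ENNReal.div_le_of_le_mul ?_
    rw [mul_comm]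
    calc (∫⁻ x, f x) = ∑' n : ℤ × ℤ, ∫⁻ x in Q n, f x := hsplit
      _ ≤ ∑' n : ℤ × ℤ, K' * f ((n.1 : ℝ), (n.2 : ℝ)) := ENNReal.tsum_le_tsum hub
      _ = K' * ∑' n : ℤ × ℤ, f ((n.1 : ℝ), (n.2 : ℝ)) := ENNReal.tsum_mul_left
  · calc (∑' n : ℤ × ℤ, f ((n.1 : ℝ), (n.2 : ℝ)))
        ≤ ∑' n : ℤ × ℤ, K' * ∫⁻ x in Q n, f x := ENNReal.tsum_le_tsum hlb
      _ = K' * ∑' n : ℤ × ℤ, ∫⁻ x in Q n, f x := ENNReal.tsum_mul_left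
      _ = K' * ∫⁻ x, f x := by rw [hsplit]
end

section
/- Let ω = (ω₁, ω₂) ∈ ℝ² with ω ≠ 0, set ω⊥ = (ω₂, −ω₁), and let s₁, s₂ > 1/2 satisfy 1/s₁ + 1/s₂ < 2. Then there exists a constant C = C(ω, s₁, s₂) such that for every trigonometric polynomial f on 𝕋² with coefficients f̂ : ℤ² → ℂ and every x ∈ ℝ²: |f(x)| ≤ C·[ (Σ_{n∈ℤ²} (1+(ω·n)²)^{s₁} |f̂(n)|²)^{1/2} + (Σ_{n∈ℤ²} (1+(ω⊥·n)²)^{s₂} |f̂(n)|²)^{1/2} ]. -/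
open scoped Real

/-- The trigonometric polynomial on `𝕋²` with Fourier coefficients `c : ℤ² → ℂ`,
viewed as a function on `ℝ²`: `x ↦ Σ_{n∈ℤ²} c(n) e^{2πi n·x}`. -/
noncomputable def trigSum (c : ℤ × ℤ → ℂ) (x : ℝ × ℝ) : ℂ :=
  ∑' n : ℤ × ℤ, c n * Complex.exp (2 * Real.pi * Complex.I *
    (((n.1 : ℝ) * x.1 + (n.2 : ℝ) * x.2 : ℝ) : ℂ))

/-!
With the weight `W n = (1 + (ω·n)²)^s₁ + (1 + (ω⊥·n)²)^s₂`, Cauchy–Schwarz gives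
`|f x| ≤ Σ |f̂ n| ≤ (Σ W⁻¹)^{1/2} (Σ W |f̂|²)^{1/2}`, so it suffices that `Σ W⁻¹ < ∞`.
Weighted AM–GM with weights `s₂/(s₁+s₂)` and `s₁/(s₁+s₂)` gives
`W n ≥ ((1 + (ω·n)²)(1 + (ω⊥·n)²))^r` with `r = s₁s₂/(s₁+s₂)`, and `r > 1/2` is exactly
`1/s₁ + 1/s₂ < 2`. Since `n ↦ (ω·n, ω⊥·n)` is a rotation followed by a dilation by `|ω|`,
the integer parts of a suitable rescaling of this pair determine `n`; this compares `Σ W⁻¹`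
with the convergent lattice sum `Σ_{k∈ℤ²} (1 + k₁²)^{-r} (1 + k₂²)^{-r}`.
-/

open Function Finset

lemma summable_one_add_sq_rpow_neg {p : ℝ} (hp : 1 / 2 < p) :
    Summable fun k : ℤ => (1 + (k : ℝ) ^ 2) ^ (-p) := by
  refine .of_norm_bounded_eventually (Real.summable_abs_int_rpow (b := 2 * p) (by linarith)) ?_
  filter_upwards [(Set.finite_singleton (0 : ℤ)).compl_mem_cofinite] with k hk
  have hk₀ : (k : ℝ) ≠ 0 := by simpa using hk
  rw [Real.norm_of_nonneg (by positivity), show -(2 * p) = 2 * -p by ring,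
    Real.rpow_mul (abs_nonneg _), Real.rpow_two, sq_abs]
  exact Real.rpow_le_rpow_of_nonpos (by positivity) (by linarith) (by linarith)

lemma one_add_floor_mul_sq_le (l a : ℝ) :
    1 + (⌊l * a⌋ : ℝ) ^ 2 ≤ 3 * (1 + l ^ 2) * (1 + a ^ 2) := by
  have h₁ : (⌊l * a⌋ : ℝ) ≤ l * a := Int.floor_le _
  have h₂ : l * a - 1 < ⌊l * a⌋ := by linarith [Int.lt_floor_add_one (l * a)]
  nlinarith [sq_nonneg (2 * (l * a) - ⌊l * a⌋), sq_nonneg l, sq_nonneg a,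
    mul_nonneg (sub_nonneg.2 h₁) (by linarith : (0 : ℝ) ≤ ⌊l * a⌋ - l * a + 1)]

lemma one_add_sq_rpow_neg_le_floor (l a : ℝ) {p : ℝ} (hp : 0 ≤ p) :
    (1 + a ^ 2) ^ (-p) ≤ (3 * (1 + l ^ 2)) ^ p * (1 + (⌊l * a⌋ : ℝ) ^ 2) ^ (-p) := by
  have hK : 0 < 3 * (1 + l ^ 2) := by positivity
  calc (1 + a ^ 2) ^ (-p) ≤ ((1 + (⌊l * a⌋ : ℝ) ^ 2) / (3 * (1 + l ^ 2))) ^ (-p) :=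
        Real.rpow_le_rpow_of_nonpos (by positivity)
          ((div_le_iff₀' hK).2 (one_add_floor_mul_sq_le l a)) (by linarith)
    _ = _ := by
        rw [Real.div_rpow (by positivity) hK.le, Real.rpow_neg hK.le, div_inv_eq_mul, mul_comm]

lemma summable_one_add_sq_rpow_neg_mul_of_floor_injective {ι : Type*} {a b : ι → ℝ} {l : ℝ}
    (hinj : Injective fun i => (⌊l * a i⌋, ⌊l * b i⌋)) {p q : ℝ} (hp : 1 / 2 < p) (hq : 1 / 2 < q) :
    Summable fun i => (1 + a i ^ 2) ^ (-p) * (1 + b i ^ 2) ^ (-q) := by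
  have hlattice :
      Summable fun k : ℤ × ℤ => (1 + (k.1 : ℝ) ^ 2) ^ (-p) * (1 + (k.2 : ℝ) ^ 2) ^ (-q) :=
    (summable_one_add_sq_rpow_neg hp).mul_of_nonneg (summable_one_add_sq_rpow_neg hq)
      (fun _ => by positivity) (fun _ => by positivity)
  refine .of_nonneg_of_le (fun _ => by positivity) (fun i => ?_)
    ((hlattice.comp_injective hinj).mul_left ((3 * (1 + l ^ 2)) ^ p * (3 * (1 + l ^ 2)) ^ q))
  rw [comp_apply, mul_mul_mul_comm]
  exact mul_le_mul (one_add_sq_rpow_neg_le_floor l _ (by linarith))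
    (one_add_sq_rpow_neg_le_floor l _ (by linarith)) (by positivity) (by positivity)

lemma rpow_mul_rpow_le_rpow_add_rpow {A B s₁ s₂ : ℝ} (hA : 0 ≤ A) (hB : 0 ≤ B) (hs₁ : 0 < s₁)
    (hs₂ : 0 < s₂) :
    A ^ (s₁ * s₂ / (s₁ + s₂)) * B ^ (s₁ * s₂ / (s₁ + s₂)) ≤ A ^ s₁ + B ^ s₂ := by
  have hs : 0 < s₁ + s₂ := by linarith
  have hw₁ : s₂ / (s₁ + s₂) ≤ 1 := (div_le_one hs).2 (by linarith)
  have hw₂ : s₁ / (s₁ + s₂) ≤ 1 := (div_le_one hs).2 (by linarith)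
  calc A ^ (s₁ * s₂ / (s₁ + s₂)) * B ^ (s₁ * s₂ / (s₁ + s₂))
        = (A ^ s₁) ^ (s₂ / (s₁ + s₂)) * (B ^ s₂) ^ (s₁ / (s₁ + s₂)) := by
          rw [← Real.rpow_mul hA, ← Real.rpow_mul hB]
          congr 2 <;> ring
    _ ≤ s₂ / (s₁ + s₂) * A ^ s₁ + s₁ / (s₁ + s₂) * B ^ s₂ :=
          Real.geom_mean_le_arith_mean2_weighted (by positivity) (by positivity) (by positivity)
            (by positivity) (by field_simp; ring)
    _ ≤ A ^ s₁ + B ^ s₂ :=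
          add_le_add (mul_le_of_le_one_left (by positivity) hw₁)
            (mul_le_of_le_one_left (by positivity) hw₂)

lemma sum_norm_le_sqrt_tsum_inv_mul_sum {ι E : Type*} [SeminormedAddGroup E] {w : ι → ℝ}
    (hw : ∀ i, 0 < w i) (hsum : Summable fun i => (w i)⁻¹) (c : ι → E) (s : Finset ι) :
    ∑ i ∈ s, ‖c i‖ ≤ √((∑' i, (w i)⁻¹) * ∑ i ∈ s, w i * ‖c i‖ ^ 2) := by
  refine (le_abs_self _).trans (Real.abs_le_sqrt ?_)
  calc (∑ i ∈ s, ‖c i‖) ^ 2 ≤ (∑ i ∈ s, (w i)⁻¹) * ∑ i ∈ s, w i * ‖c i‖ ^ 2 :=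
        sum_sq_le_sum_mul_sum_of_sq_le_mul s (fun i _ => (inv_pos.2 (hw i)).le)
          (fun i _ => by have := hw i; positivity)
          (fun i _ => (inv_mul_cancel_left₀ (hw i).ne' _).ge)
    _ ≤ (∑' i, (w i)⁻¹) * ∑ i ∈ s, w i * ‖c i‖ ^ 2 := by
        gcongr
        · exact sum_nonneg fun i _ => by have := hw i; positivity
        · exact hsum.sum_le_tsum s fun i _ => (inv_pos.2 (hw i)).le

lemma floor_mul_dot_perp_injective (ω : ℝ × ℝ) {l : ℝ} (hl : 2 ≤ l ^ 2 * (ω.1 ^ 2 + ω.2 ^ 2)) :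
    Injective fun n : ℤ × ℤ => (⌊l * (ω.1 * n.1 + ω.2 * n.2)⌋, ⌊l * (ω.2 * n.1 - ω.1 * n.2)⌋) := by
  intro n m hnm
  simp only [Prod.mk.injEq] at hnm
  have h₁ := Int.abs_sub_lt_one_of_floor_eq_floor hnm.1
  have h₂ := Int.abs_sub_lt_one_of_floor_eq_floor hnm.2
  have hsq : l ^ 2 * (ω.1 ^ 2 + ω.2 ^ 2) * (((n.1 - m.1 : ℤ) : ℝ) ^ 2 + ((n.2 - m.2 : ℤ) : ℝ) ^ 2)
      < 2 := by
    have e : l ^ 2 * (ω.1 ^ 2 + ω.2 ^ 2) * (((n.1 - m.1 : ℤ) : ℝ) ^ 2 + ((n.2 - m.2 : ℤ) : ℝ) ^ 2) =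
        (l * (ω.1 * n.1 + ω.2 * n.2) - l * (ω.1 * m.1 + ω.2 * m.2)) ^ 2 +
        (l * (ω.2 * n.1 - ω.1 * n.2) - l * (ω.2 * m.1 - ω.1 * m.2)) ^ 2 := by push_cast; ring
    rw [e]
    nlinarith [sq_lt_one_iff_abs_lt_one _ |>.2 h₁, sq_lt_one_iff_abs_lt_one _ |>.2 h₂]
  have hd : ((n.1 - m.1) ^ 2 + (n.2 - m.2) ^ 2 : ℤ) < 1 := by
    have : ((n.1 - m.1 : ℤ) : ℝ) ^ 2 + ((n.2 - m.2 : ℤ) : ℝ) ^ 2 < 1 := by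
      nlinarith [sq_nonneg ((n.1 - m.1 : ℤ) : ℝ), sq_nonneg ((n.2 - m.2 : ℤ) : ℝ)]
    exact_mod_cast this
  ext <;> nlinarith [sq_nonneg (n.1 - m.1), sq_nonneg (n.2 - m.2)]

noncomputable def anisotropicWeight (ω : ℝ × ℝ) (s₁ s₂ : ℝ) (n : ℤ × ℤ) : ℝ :=
  (1 + (ω.1 * n.1 + ω.2 * n.2) ^ 2) ^ s₁ + (1 + (ω.2 * n.1 - ω.1 * n.2) ^ 2) ^ s₂

lemma anisotropicWeight_pos (ω : ℝ × ℝ) (s₁ s₂ : ℝ) (n : ℤ × ℤ) :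
    0 < anisotropicWeight ω s₁ s₂ n := by
  unfold anisotropicWeight
  positivity

lemma summable_anisotropicWeight_inv {ω : ℝ × ℝ} (hω : ω ≠ 0) {s₁ s₂ : ℝ} (hs₁ : 0 < s₁)
    (hs₂ : 0 < s₂) (hsum : 1 / s₁ + 1 / s₂ < 2) :
    Summable fun n => (anisotropicWeight ω s₁ s₂ n)⁻¹ := by
  have hr : 1 / 2 < s₁ * s₂ / (s₁ + s₂) := by
    rw [div_add_div _ _ hs₁.ne' hs₂.ne', div_lt_iff₀ (by positivity)] at hsum
    rw [lt_div_iff₀ (by linarith)]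
    linarith
  have hω₂ : 0 < ω.1 ^ 2 + ω.2 ^ 2 := by
    have : ω.1 ≠ 0 ∨ ω.2 ≠ 0 := by
      contrapose! hω
      exact Prod.ext hω.1 hω.2
    rcases this with h | h <;> positivity
  have hl : 2 ≤ √(2 / (ω.1 ^ 2 + ω.2 ^ 2)) ^ 2 * (ω.1 ^ 2 + ω.2 ^ 2) := by
    rw [Real.sq_sqrt (by positivity), div_mul_cancel₀ _ hω₂.ne']
  refine .of_nonneg_of_le (fun n => (inv_pos.2 (anisotropicWeight_pos ω s₁ s₂ n)).le) (fun n => ?_)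
    (summable_one_add_sq_rpow_neg_mul_of_floor_injective
      (a := fun n : ℤ × ℤ => ω.1 * n.1 + ω.2 * n.2) (b := fun n : ℤ × ℤ => ω.2 * n.1 - ω.1 * n.2)
      (floor_mul_dot_perp_injective ω hl) hr hr)
  rw [Real.rpow_neg (by positivity), Real.rpow_neg (by positivity), ← mul_inv]
  exact inv_anti₀ (by positivity)
    (rpow_mul_rpow_le_rpow_add_rpow (by positivity) (by positivity) hs₁ hs₂)

lemma norm_trigSum_le_sum {c : ℤ × ℤ → ℂ} {s : Finset (ℤ × ℤ)} (hs : ∀ n ∉ s, c n = 0)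
    (x : ℝ × ℝ) : ‖trigSum c x‖ ≤ ∑ n ∈ s, ‖c n‖ := by
  rw [trigSum, tsum_eq_sum fun n hn => by simp [hs n hn]]
  refine norm_sum_le_of_le s fun n _ => ?_
  rw [norm_mul, show 2 * π * Complex.I * _ = ((2 * π * (n.1 * x.1 + n.2 * x.2) : ℝ) : ℂ) * Complex.I
    by push_cast; ring, Complex.norm_exp_ofReal_mul_I, mul_one]

/-- anisotropic Sobolev embedding `H^{s₁,s₂}_ω ↪ L^∞` for
trigonometric polynomials on `𝕋²`. Here `ω⊥ = (ω₂, −ω₁)`. -/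
theorem stmt_2 (ω : ℝ × ℝ) (hω : ω ≠ 0) (s₁ s₂ : ℝ)
    (hs₁ : 1 / 2 < s₁) (hs₂ : 1 / 2 < s₂) (hsum : 1 / s₁ + 1 / s₂ < 2) :
    ∃ C : ℝ, ∀ c : ℤ × ℤ → ℂ, (Function.support c).Finite → ∀ x : ℝ × ℝ,
      ‖trigSum c x‖ ≤ C *
        ((∑' n : ℤ × ℤ,
            (1 + (ω.1 * (n.1 : ℝ) + ω.2 * (n.2 : ℝ)) ^ 2) ^ s₁ * ‖c n‖ ^ 2) ^ ((1 : ℝ) / 2) +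
         (∑' n : ℤ × ℤ,
            (1 + (ω.2 * (n.1 : ℝ) - ω.1 * (n.2 : ℝ)) ^ 2) ^ s₂ * ‖c n‖ ^ 2) ^ ((1 : ℝ) / 2)) := by
  have hW := summable_anisotropicWeight_inv hω (by linarith) (by linarith) hsum
  set K := ∑' n, (anisotropicWeight ω s₁ s₂ n)⁻¹
  refine ⟨√K, fun c hc x => ?_⟩
  set s := hc.toFinset
  have hs : ∀ n ∉ s, c n = 0 := fun n hn => by simpa [s] using hn
  rw [tsum_eq_sum (f := fun n => _ * ‖c n‖ ^ 2) (s := s) fun n hn => by simp [hs n hn],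
    tsum_eq_sum (f := fun n => _ * ‖c n‖ ^ 2) (s := s) fun n hn => by simp [hs n hn]]
  calc ‖trigSum c x‖ ≤ ∑ n ∈ s, ‖c n‖ := norm_trigSum_le_sum hs x
    _ ≤ √(K * ∑ n ∈ s, anisotropicWeight ω s₁ s₂ n * ‖c n‖ ^ 2) :=
        sum_norm_le_sqrt_tsum_inv_mul_sum (anisotropicWeight_pos ω s₁ s₂) hW c s
    _ = √K * (∑ n ∈ s, anisotropicWeight ω s₁ s₂ n * ‖c n‖ ^ 2) ^ ((1 : ℝ) / 2) := by
        rw [Real.sqrt_mul (tsum_nonneg fun n => (inv_pos.2 (anisotropicWeight_pos ω s₁ s₂ n)).le),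
          ← Real.sqrt_eq_rpow]
    _ ≤ _ := by
        gcongr
        simp only [anisotropicWeight, add_mul, sum_add_distrib]
        exact Real.rpow_add_le_add_rpow (by positivity) (by positivity) (by norm_num) (by norm_num)
end

section
/- Let ω = (ω₁, ω₂) ∈ ℝ² with ω ≠ 0, set ω⊥ = (ω₂, −ω₁), and let s₁, s₂ > 1/2 satisfy 1/s₁ + 1/s₂ < 2. Then Σ_{n∈ℤ²} 1/(1 + |ω·n|^{2s₁} + |ω⊥·n|^{2s₂}) < ∞. -/
/-! The map `n ↦ (ω·n, ω⊥·n)` multiplies Euclidean distances by `|ω|`, so once both coordinates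
are scaled by `c` with `c²|ω|² ≥ 2`, taking their integer parts is injective on `ℤ²`.
For `θ ∈ [0, 1]`, weighted AM–GM gives
`(1 + |x|)^(r₁θ) (1 + |y|)^(r₂(1-θ)) ≲ 1 + |x|^r₁ + |y|^r₂`, and `1/r₁ + 1/r₂ < 1` (with `rᵢ = 2sᵢ`)
leaves room for a `θ` making both exponents exceed `1`. The weight is thus dominated by a summable
product of one-dimensional weights on `ℤ²`, composed with an injective map. -/

open Function Real

lemma summable_one_add_abs_int_rpow_neg {p : ℝ} (hp : 1 < p) :
    Summable fun m : ℤ => (1 + |(m : ℝ)|) ^ (-p) := by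
  refine (summable_abs_int_rpow hp).of_norm_bounded_eventually ?_
  filter_upwards [(Set.finite_singleton (0 : ℤ)).compl_mem_cofinite] with m hm
  have hm₀ : 0 < |(m : ℝ)| := abs_pos.2 (Int.cast_ne_zero.2 hm)
  rw [norm_of_nonneg (by positivity)]
  exact rpow_le_rpow_of_nonpos hm₀ (by linarith) (by linarith)

lemma exists_one_lt_mul_and_one_lt_mul_one_sub {r₁ r₂ : ℝ} (hr₁ : 0 < r₁) (hr₂ : 0 < r₂)
    (h : 1 / r₁ + 1 / r₂ < 1) : ∃ θ, 0 ≤ θ ∧ θ ≤ 1 ∧ 1 < r₁ * θ ∧ 1 < r₂ * (1 - θ) := by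
  refine ⟨1 / r₁ + (1 - 1 / r₁ - 1 / r₂) / 2, by linarith [one_div_pos.2 hr₁, one_div_pos.2 hr₂],
    by linarith [one_div_pos.2 hr₂], ?_, ?_⟩
  · rw [mul_add, mul_one_div_cancel hr₁.ne']
    nlinarith
  · have : 1 - (1 / r₁ + (1 - 1 / r₁ - 1 / r₂) / 2) = 1 / r₂ + (1 - 1 / r₁ - 1 / r₂) / 2 := by ring
    rw [this, mul_add, mul_one_div_cancel hr₂.ne']
    nlinarith

lemma one_add_rpow_le_two_rpow_mul {x r : ℝ} (hx : 0 ≤ x) (hr : 0 ≤ r) :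
    (1 + x) ^ r ≤ 2 ^ r * (1 + x ^ r) := by
  have hxr : 0 ≤ x ^ r := rpow_nonneg hx r
  rcases le_total x 1 with h | h
  · calc (1 + x) ^ r ≤ 2 ^ r := rpow_le_rpow (by positivity) (by linarith) hr
      _ ≤ 2 ^ r * (1 + x ^ r) := le_mul_of_one_le_right (by positivity) (by linarith)
  · calc (1 + x) ^ r ≤ (2 * x) ^ r := rpow_le_rpow (by positivity) (by linarith) hr
      _ = 2 ^ r * x ^ r := mul_rpow zero_le_two hx
      _ ≤ 2 ^ r * (1 + x ^ r) := by gcongr; linarith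

lemma one_add_rpow_mul_one_add_rpow_le {X Y θ : ℝ} (hX : 0 ≤ X) (hY : 0 ≤ Y) (hθ₀ : 0 ≤ θ)
    (hθ₁ : θ ≤ 1) : (1 + X) ^ θ * (1 + Y) ^ (1 - θ) ≤ 1 + X + Y :=
  calc (1 + X) ^ θ * (1 + Y) ^ (1 - θ) ≤ θ * (1 + X) + (1 - θ) * (1 + Y) :=
        geom_mean_le_arith_mean2_weighted hθ₀ (by linarith) (by linarith) (by linarith) (by ring)
    _ ≤ 1 + X + Y := by nlinarith

lemma one_add_rpow_mul_one_add_rpow_le_add_rpow_add_rpow {x y r₁ r₂ θ : ℝ} (hx : 0 ≤ x)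
    (hy : 0 ≤ y) (hr₁ : 0 ≤ r₁) (hr₂ : 0 ≤ r₂) (hθ₀ : 0 ≤ θ) (hθ₁ : θ ≤ 1) :
    (1 + x) ^ (r₁ * θ) * (1 + y) ^ (r₂ * (1 - θ)) ≤
      2 ^ (r₁ * θ + r₂ * (1 - θ)) * (1 + x ^ r₁ + y ^ r₂) := by
  have hx' : (1 + x) ^ (r₁ * θ) ≤ 2 ^ (r₁ * θ) * (1 + x ^ r₁) ^ θ := by
    rw [rpow_mul (by positivity), rpow_mul zero_le_two, ← mul_rpow (by positivity) (by positivity)]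
    exact rpow_le_rpow (by positivity) (one_add_rpow_le_two_rpow_mul hx hr₁) hθ₀
  have hy' : (1 + y) ^ (r₂ * (1 - θ)) ≤ 2 ^ (r₂ * (1 - θ)) * (1 + y ^ r₂) ^ (1 - θ) := by
    rw [rpow_mul (by positivity), rpow_mul zero_le_two, ← mul_rpow (by positivity) (by positivity)]
    exact rpow_le_rpow (by positivity) (one_add_rpow_le_two_rpow_mul hy hr₂) (by linarith)
  calc (1 + x) ^ (r₁ * θ) * (1 + y) ^ (r₂ * (1 - θ))
      ≤ (2 ^ (r₁ * θ) * (1 + x ^ r₁) ^ θ) * (2 ^ (r₂ * (1 - θ)) * (1 + y ^ r₂) ^ (1 - θ)) := by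
        gcongr
    _ = 2 ^ (r₁ * θ + r₂ * (1 - θ)) * ((1 + x ^ r₁) ^ θ * (1 + y ^ r₂) ^ (1 - θ)) := by
        rw [rpow_add zero_lt_two]; ring
    _ ≤ 2 ^ (r₁ * θ + r₂ * (1 - θ)) * (1 + x ^ r₁ + y ^ r₂) := by
        gcongr
        exact one_add_rpow_mul_one_add_rpow_le (by positivity) (by positivity) hθ₀ hθ₁

lemma one_add_abs_floor_mul_le (a : ℝ) {c : ℝ} (hc : 0 ≤ c) :
    1 + |(⌊c * a⌋ : ℝ)| ≤ (2 + c) * (1 + |a|) := by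
  have h : |(⌊c * a⌋ : ℝ)| ≤ c * |a| + 1 := by
    rw [abs_le]
    constructor <;> nlinarith [Int.floor_le (c * a), Int.lt_floor_add_one (c * a), le_abs_self a,
      neg_abs_le a]
  nlinarith [abs_nonneg a]

lemma injective_floor_dot_perp {ω : ℝ × ℝ} {c : ℝ} (hc : 2 ≤ c ^ 2 * (ω.1 ^ 2 + ω.2 ^ 2)) :
    Injective fun n : ℤ × ℤ =>
      (⌊c * (ω.1 * n.1 + ω.2 * n.2)⌋, ⌊c * (ω.2 * n.1 - ω.1 * n.2)⌋) := by
  rintro ⟨n₁, n₂⟩ ⟨m₁, m₂⟩ h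
  simp only [Prod.mk.injEq] at h
  have ha := Int.abs_sub_lt_one_of_floor_eq_floor h.1
  have hb := Int.abs_sub_lt_one_of_floor_eq_floor h.2
  have hsq : ((n₁ - m₁ : ℤ) : ℝ) ^ 2 + ((n₂ - m₂ : ℤ) : ℝ) ^ 2 < 1 := by
    have hnorm : (c * (ω.1 * n₁ + ω.2 * n₂) - c * (ω.1 * m₁ + ω.2 * m₂)) ^ 2
        + (c * (ω.2 * n₁ - ω.1 * n₂) - c * (ω.2 * m₁ - ω.1 * m₂)) ^ 2
        = c ^ 2 * (ω.1 ^ 2 + ω.2 ^ 2) * (((n₁ - m₁ : ℤ) : ℝ) ^ 2 + ((n₂ - m₂ : ℤ) : ℝ) ^ 2) := by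
      push_cast; ring
    have hnorm_lt : (c * (ω.1 * n₁ + ω.2 * n₂) - c * (ω.1 * m₁ + ω.2 * m₂)) ^ 2
        + (c * (ω.2 * n₁ - ω.1 * n₂) - c * (ω.2 * m₁ - ω.1 * m₂)) ^ 2 < 2 := by
      nlinarith [abs_lt.1 ha, abs_lt.1 hb]
    nlinarith [sq_nonneg ((n₁ - m₁ : ℤ) : ℝ), sq_nonneg ((n₂ - m₂ : ℤ) : ℝ)]
  have hsq' : (n₁ - m₁) ^ 2 + (n₂ - m₂) ^ 2 < 1 := by exact_mod_cast hsq
  obtain ⟨rfl, rfl⟩ : n₁ = m₁ ∧ n₂ = m₂ := by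
    constructor <;> nlinarith [sq_nonneg (n₁ - m₁), sq_nonneg (n₂ - m₂)]
  rfl

lemma one_div_one_add_rpow_add_rpow_le {a b c r₁ r₂ θ : ℝ} (hc : 0 ≤ c) (hr₁ : 0 ≤ r₁)
    (hr₂ : 0 ≤ r₂) (hθ₀ : 0 ≤ θ) (hθ₁ : θ ≤ 1) :
    1 / (1 + |a| ^ r₁ + |b| ^ r₂) ≤ (2 * (2 + c)) ^ (r₁ * θ + r₂ * (1 - θ)) *
      ((1 + |(⌊c * a⌋ : ℝ)|) ^ (-(r₁ * θ)) * (1 + |(⌊c * b⌋ : ℝ)|) ^ (-(r₂ * (1 - θ)))) := by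
  have hp : 0 ≤ r₁ * θ := mul_nonneg hr₁ hθ₀
  have hq : 0 ≤ r₂ * (1 - θ) := mul_nonneg hr₂ (by linarith)
  have hfloor : (1 + |(⌊c * a⌋ : ℝ)|) ^ (r₁ * θ) * (1 + |(⌊c * b⌋ : ℝ)|) ^ (r₂ * (1 - θ)) ≤
      (2 * (2 + c)) ^ (r₁ * θ + r₂ * (1 - θ)) * (1 + |a| ^ r₁ + |b| ^ r₂) :=
    calc (1 + |(⌊c * a⌋ : ℝ)|) ^ (r₁ * θ) * (1 + |(⌊c * b⌋ : ℝ)|) ^ (r₂ * (1 - θ))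
        ≤ ((2 + c) * (1 + |a|)) ^ (r₁ * θ) * ((2 + c) * (1 + |b|)) ^ (r₂ * (1 - θ)) := by
          gcongr <;> exact one_add_abs_floor_mul_le _ hc
      _ = (2 + c) ^ (r₁ * θ + r₂ * (1 - θ)) *
            ((1 + |a|) ^ (r₁ * θ) * (1 + |b|) ^ (r₂ * (1 - θ))) := by
          rw [mul_rpow (by positivity) (by positivity), mul_rpow (by positivity) (by positivity),
            rpow_add (by positivity)]
          ring
      _ ≤ (2 + c) ^ (r₁ * θ + r₂ * (1 - θ)) *
            (2 ^ (r₁ * θ + r₂ * (1 - θ)) * (1 + |a| ^ r₁ + |b| ^ r₂)) :=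
          mul_le_mul_of_nonneg_left (one_add_rpow_mul_one_add_rpow_le_add_rpow_add_rpow
            (abs_nonneg a) (abs_nonneg b) hr₁ hr₂ hθ₀ hθ₁) (by positivity)
      _ = _ := by rw [mul_rpow (by positivity) (by positivity)]; ring
  rw [rpow_neg (by positivity), rpow_neg (by positivity), ← mul_inv, ← div_eq_mul_inv,
    div_le_div_iff₀ (by positivity) (by positivity), one_mul]
  exact hfloor

/-- summability of the anisotropic weight over the integer lattice:
for `ω ≠ 0`, `ω⊥ = (ω₂, −ω₁)`, `s₁, s₂ > 1/2` with `1/s₁ + 1/s₂ < 2`,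
`Σ_{n∈ℤ²} 1/(1 + |ω·n|^{2s₁} + |ω⊥·n|^{2s₂}) < ∞`. -/
theorem stmt_3 (ω : ℝ × ℝ) (hω : ω ≠ 0) (s₁ s₂ : ℝ)
    (hs₁ : 1 / 2 < s₁) (hs₂ : 1 / 2 < s₂) (hsum : 1 / s₁ + 1 / s₂ < 2) :
    Summable (fun n : ℤ × ℤ =>
      1 / (1 + |ω.1 * (n.1 : ℝ) + ω.2 * (n.2 : ℝ)| ^ (2 * s₁)
             + |ω.2 * (n.1 : ℝ) - ω.1 * (n.2 : ℝ)| ^ (2 * s₂))) := by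
  have hW : 0 < ω.1 ^ 2 + ω.2 ^ 2 := by
    by_contra! h
    apply hω
    ext <;> simp only [Prod.fst_zero, Prod.snd_zero] <;> nlinarith [sq_nonneg ω.1, sq_nonneg ω.2]
  obtain ⟨c, hc₀, hc⟩ : ∃ c : ℝ, 0 ≤ c ∧ 2 ≤ c ^ 2 * (ω.1 ^ 2 + ω.2 ^ 2) :=
    ⟨√(2 / (ω.1 ^ 2 + ω.2 ^ 2)), sqrt_nonneg _,
      by rw [sq_sqrt (by positivity), div_mul_cancel₀ _ hW.ne']⟩
  obtain ⟨θ, hθ₀, hθ₁, hp, hq⟩ := exists_one_lt_mul_and_one_lt_mul_one_sub (r₁ := 2 * s₁)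
    (r₂ := 2 * s₂) (by linarith) (by linarith)
    (by rw [← one_div_mul_one_div, ← one_div_mul_one_div]; linarith)
  have hg := (summable_one_add_abs_int_rpow_neg hp).mul_of_nonneg
    (summable_one_add_abs_int_rpow_neg hq) (fun _ => by positivity) (fun _ => by positivity)
  refine ((hg.comp_injective (injective_floor_dot_perp hc)).mul_left
    ((2 * (2 + c)) ^ (2 * s₁ * θ + 2 * s₂ * (1 - θ)))).of_nonneg_of_le
    (fun n => by positivity) (fun n => ?_)
  exact one_div_one_add_rpow_add_rpow_le hc₀ (by linarith) (by linarith) hθ₀ hθ₁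
end

section
/- Let s₁ > 0, s₂ ≥ 0 and 0 ≤ k ≤ s₁ be real numbers. There exists a constant C = C(s₁, s₂, k) such that for all ξ₁, ξ₂ ∈ ℝ: |ξ₁|^k · ( (1+ξ₁²)^{(s₁−k)/2} + (1+ξ₂²)^{(s₁−k)s₂/(2s₁)} ) ≤ C·( (1+ξ₁²)^{s₁/2} + (1+ξ₂²)^{s₂/2} ). -/
/-! Bound `|ξ₁|^k` by `(1+ξ₁²)^{k/2}`. The first product then collapses to `(1+ξ₁²)^{s₁/2}`, and
the cross term is `A^θ B^{1-θ}` with `A = (1+ξ₁²)^{s₁/2}`, `B = (1+ξ₂²)^{s₂/2}` and `θ = k/s₁`,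
which weighted AM-GM (Young's inequality) bounds by `A + B`. Hence `C = 2` works. -/

open Real

lemma abs_rpow_le_one_add_sq_rpow_half (x : ℝ) {k : ℝ} (hk : 0 ≤ k) :
    |x| ^ k ≤ (1 + x ^ 2) ^ (k / 2) := by
  calc |x| ^ k = (|x| ^ (2 : ℝ)) ^ (k / 2) := by
        rw [← rpow_mul (abs_nonneg x)]; ring_nf
    _ ≤ (1 + x ^ 2) ^ (k / 2) := by
        gcongr
        rw [rpow_two, sq_abs]
        linarith

lemma rpow_mul_rpow_one_sub_le_add {A B θ : ℝ} (hA : 0 ≤ A) (hB : 0 ≤ B)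
    (hθ₀ : 0 ≤ θ) (hθ₁ : θ ≤ 1) : A ^ θ * B ^ (1 - θ) ≤ A + B :=
  calc A ^ θ * B ^ (1 - θ) ≤ θ * A + (1 - θ) * B :=
        geom_mean_le_arith_mean2_weighted hθ₀ (by linarith) hA hB (by ring)
    _ ≤ A + B := by nlinarith

theorem stmt_6_general (s₁ s₂ k : ℝ) (hs₁ : 0 < s₁) (hk0 : 0 ≤ k) (hk : k ≤ s₁) :
    ∃ C : ℝ, ∀ ξ₁ ξ₂ : ℝ,
      |ξ₁| ^ k * ((1 + ξ₁ ^ 2) ^ ((s₁ - k) / 2)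
          + (1 + ξ₂ ^ 2) ^ ((s₁ - k) * s₂ / (2 * s₁))) ≤
        C * ((1 + ξ₁ ^ 2) ^ (s₁ / 2) + (1 + ξ₂ ^ 2) ^ (s₂ / 2)) := by
  refine ⟨2, fun ξ₁ ξ₂ => ?_⟩
  set a := 1 + ξ₁ ^ 2
  set b := 1 + ξ₂ ^ 2
  have ha : 0 < a := by positivity
  have hb : 0 < b := by positivity
  have hθ : 1 - k / s₁ = (s₁ - k) / s₁ := by field_simp
  have hsplit : a ^ (k / 2) * a ^ ((s₁ - k) / 2) = a ^ (s₁ / 2) := by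
    rw [← rpow_add ha]; ring_nf
  have hcross : a ^ (k / 2) * b ^ ((s₁ - k) * s₂ / (2 * s₁)) =
      (a ^ (s₁ / 2)) ^ (k / s₁) * (b ^ (s₂ / 2)) ^ (1 - k / s₁) := by
    rw [hθ, ← rpow_mul ha.le, ← rpow_mul hb.le]
    congr 2 <;> field_simp
  have hyoung := rpow_mul_rpow_one_sub_le_add (rpow_pos_of_pos ha (s₁ / 2)).le
    (rpow_pos_of_pos hb (s₂ / 2)).le (div_nonneg hk0 hs₁.le) ((div_le_one hs₁).2 hk)
  calc |ξ₁| ^ k * (a ^ ((s₁ - k) / 2) + b ^ ((s₁ - k) * s₂ / (2 * s₁)))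
      ≤ a ^ (k / 2) * (a ^ ((s₁ - k) / 2) + b ^ ((s₁ - k) * s₂ / (2 * s₁))) := by
        gcongr
        exact abs_rpow_le_one_add_sq_rpow_half ξ₁ hk0
    _ = a ^ (s₁ / 2) + (a ^ (s₁ / 2)) ^ (k / s₁) * (b ^ (s₂ / 2)) ^ (1 - k / s₁) := by
        rw [mul_add, hsplit, hcross]
    _ ≤ 2 * (a ^ (s₁ / 2) + b ^ (s₂ / 2)) := by
        linarith [rpow_pos_of_pos hb (s₂ / 2)]

/-- the pointwise symbol inequality behind the boundedness
`∂_x^k : H^{s₁,s₂}_ω → H^{s₁−k, s₂(s₁−k)/s₁}_ω`: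
`|ξ₁|^k ((1+ξ₁²)^{(s₁−k)/2} + (1+ξ₂²)^{(s₁−k)s₂/(2s₁)})
  ≤ C ((1+ξ₁²)^{s₁/2} + (1+ξ₂²)^{s₂/2})`. -/
theorem stmt_6 (s₁ s₂ k : ℝ) (hs₁ : 0 < s₁) (hs₂ : 0 ≤ s₂) (hk0 : 0 ≤ k) (hk : k ≤ s₁) :
    ∃ C : ℝ, ∀ ξ₁ ξ₂ : ℝ,
      |ξ₁| ^ k * ((1 + ξ₁ ^ 2) ^ ((s₁ - k) / 2)
          + (1 + ξ₂ ^ 2) ^ ((s₁ - k) * s₂ / (2 * s₁))) ≤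
        C * ((1 + ξ₁ ^ 2) ^ (s₁ / 2) + (1 + ξ₂ ^ 2) ^ (s₂ / 2)) :=
  stmt_6_general s₁ s₂ k hs₁ hk0 hk
end

section
/- Let ω ∈ ℝ², let s ≥ 0 be real, and let ψ : ℝ → [0,1] be smooth with ψ(x) = 1 for x ≥ 2 and ψ(x) = 0 for x ≤ 1/2. There exists a constant C = C(s, ψ, ω) such that for all finitely supported f̂, ĝ : ℤ² → ℂ, setting h(n) = ψ(ω·n)·Σ_{a∈ℤ², ω·a<0} f̂(a)·ĝ(n−a), one has (Σ_{n∈ℤ²} |ω·n|^{2s}|h(n)|²)^{1/2} ≤ C·(sup_{x∈ℝ²} |Σ_{a∈ℤ², ω·a<0} f̂(a)e^{2πi a·x}|)·(Σ_{n∈ℤ²} |ω·n|^{2s}|ĝ(n)|²)^{1/2}. -/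
open scoped Real


open MeasureTheory
open scoped Pointwise

noncomputable def stmtE (n : ℤ × ℤ) (x : ℝ × ℝ) : ℂ :=
  Complex.exp (2 * Real.pi * Complex.I * (((n.1 : ℝ) * x.1 + (n.2 : ℝ) * x.2 : ℝ) : ℂ))

lemma stmt13_int1 (k : ℤ) :
    (∫ t in (0:ℝ)..1, Complex.exp (2 * Real.pi * Complex.I * (k : ℂ) * t)) =
      if k = 0 then 1 else 0 := by
  rcases eq_or_ne k 0 with rfl | hk
  · simp
  · rw [if_neg hk]
    have hc : (2 * Real.pi * Complex.I * (k : ℂ)) ≠ 0 := by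
      simp [Real.pi_ne_zero, Complex.I_ne_zero, hk]
    rw [integral_exp_mul_complex hc]
    have : Complex.exp (2 * Real.pi * Complex.I * (k : ℂ) * 1) = 1 := by
      rw [mul_one]
      have := Complex.exp_int_mul_two_pi_mul_I k
      rw [← this]; ring_nf
    rw [show ((1:ℝ):ℂ) = 1 by norm_num, show ((0:ℝ):ℂ) = 0 by norm_num, this]
    simp

noncomputable def stmtQ : Set (ℝ × ℝ) := (Set.Icc (0:ℝ) 1) ×ˢ (Set.Icc (0:ℝ) 1)

lemma stmt13_E_split (k : ℤ × ℤ) (x : ℝ × ℝ) :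
    stmtE k x = Complex.exp (2 * Real.pi * Complex.I * (k.1 : ℂ) * (x.1 : ℂ)) *
      Complex.exp (2 * Real.pi * Complex.I * (k.2 : ℂ) * (x.2 : ℂ)) := by
  rw [stmtE, ← Complex.exp_add]
  congr 1
  push_cast
  ring

lemma stmt13_E_cont (k : ℤ × ℤ) : Continuous (stmtE k) := by
  unfold stmtE
  fun_prop

lemma stmt13_measQ : MeasurableSet stmtQ := (measurableSet_Icc.prod measurableSet_Icc)

lemma stmt13_compQ : IsCompact stmtQ := isCompact_Icc.prod isCompact_Icc

lemma stmt13_icc_int (c : ℝ → ℂ) : (∫ t in Set.Icc (0:ℝ) 1, c t) = ∫ t in (0:ℝ)..1, c t := by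
  rw [MeasureTheory.integral_Icc_eq_integral_Ioc, intervalIntegral.integral_of_le zero_le_one]

lemma stmt13_orth (k : ℤ × ℤ) :
    (∫ x in stmtQ, stmtE k x) = if k = 0 then 1 else 0 := by
  have hint : IntegrableOn (stmtE k) stmtQ volume :=
    (stmt13_E_cont k).continuousOn.integrableOn_compact stmt13_compQ
  rw [stmtQ] at hint ⊢
  rw [Measure.volume_eq_prod ℝ ℝ] at hint ⊢
  rw [MeasureTheory.setIntegral_prod _ hint]
  simp only [stmt13_E_split]
  have h2 : ∀ x1 : ℝ, (∫ x2 in Set.Icc (0:ℝ) 1,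
      Complex.exp (2 * Real.pi * Complex.I * (k.1 : ℂ) * (x1 : ℂ)) *
        Complex.exp (2 * Real.pi * Complex.I * (k.2 : ℂ) * (x2 : ℂ))) =
      Complex.exp (2 * Real.pi * Complex.I * (k.1 : ℂ) * (x1 : ℂ)) *
        (if k.2 = 0 then 1 else 0) := by
    intro x1
    rw [MeasureTheory.integral_const_mul, stmt13_icc_int, stmt13_int1]
  simp only [h2]
  rw [MeasureTheory.integral_mul_const, stmt13_icc_int, stmt13_int1]
  rcases eq_or_ne k 0 with rfl | hk
  · simp
  · rw [if_neg hk]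
    have hk' : ¬(k.1 = 0 ∧ k.2 = 0) := by
      rintro ⟨h1, h2⟩
      exact hk (Prod.ext h1 h2)
    rcases not_and_or.mp hk' with h | h <;> simp [h]

lemma stmt13_E_mul_conj (n m : ℤ × ℤ) (x : ℝ × ℝ) :
    stmtE n x * (starRingEnd ℂ) (stmtE m x) = stmtE (n - m) x := by
  unfold stmtE
  rw [← Complex.exp_conj, ← Complex.exp_add]
  congr 1
  rw [map_mul, map_mul, map_mul]
  simp only [Complex.conj_I, Complex.conj_ofReal, map_ofNat]
  push_cast [Prod.fst_sub, Prod.snd_sub]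
  ring

lemma stmt13_norm_sq (z : ℂ) : (‖z‖:ℝ)^2 = (z * (starRingEnd ℂ) z).re := by
  rw [Complex.mul_conj, Complex.ofReal_re, Complex.normSq_eq_norm_sq]

lemma stmt13_parseval (P : Finset (ℤ × ℤ)) (c : ℤ × ℤ → ℂ) :
    (∫ x in stmtQ, ‖∑ n ∈ P, c n * stmtE n x‖^2) = ∑ n ∈ P, ‖c n‖^2 := by
  set F : ℝ × ℝ → ℂ := fun x => ∑ n ∈ P, c n * stmtE n x with hFdef
  have hFc : Continuous F := continuous_finset_sum _ fun n _ => continuous_const.mul (stmt13_E_cont n)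
  have hGc : Continuous (fun x => F x * (starRingEnd ℂ) (F x)) := hFc.mul (continuous_star.comp hFc)
  have hGint : IntegrableOn (fun x => F x * (starRingEnd ℂ) (F x)) stmtQ volume :=
    hGc.continuousOn.integrableOn_compact stmt13_compQ
  have step1 : (∫ x in stmtQ, ‖F x‖^2) = (∫ x in stmtQ, F x * (starRingEnd ℂ) (F x)).re := by
    rw [show (∫ x in stmtQ, F x * (starRingEnd ℂ) (F x)).re
        = RCLike.re (∫ x in stmtQ, F x * (starRingEnd ℂ) (F x)) from rfl, ← integral_re hGint]
    refine MeasureTheory.integral_congr_ae (Filter.Eventually.of_forall fun x => ?_)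
    show ‖F x‖ ^ 2 = RCLike.re (F x * (starRingEnd ℂ) (F x))
    exact stmt13_norm_sq (F x)
  have hprod : ∀ x, F x * (starRingEnd ℂ) (F x) =
      ∑ n ∈ P, ∑ m ∈ P, (c n * (starRingEnd ℂ) (c m)) * stmtE (n - m) x := by
    intro x
    rw [hFdef]
    simp only [map_sum, map_mul, Finset.sum_mul_sum]
    refine Finset.sum_congr rfl fun n _ => Finset.sum_congr rfl fun m _ => ?_
    rw [← stmt13_E_mul_conj n m x]
    ring
  have step2 : (∫ x in stmtQ, F x * (starRingEnd ℂ) (F x)) =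
      ∑ n ∈ P, (c n * (starRingEnd ℂ) (c n)) := by
    rw [MeasureTheory.integral_congr_ae (Filter.Eventually.of_forall hprod)]
    rw [MeasureTheory.integral_finset_sum]
    swap
    · exact fun n _ => ((continuous_finset_sum _ fun m _ =>
        continuous_const.mul (stmt13_E_cont (n - m))).continuousOn.integrableOn_compact
          stmt13_compQ)
    refine Finset.sum_congr rfl fun n hn => ?_
    rw [MeasureTheory.integral_finset_sum]
    swap
    · exact fun m _ => ((continuous_const.mul (stmt13_E_cont (n - m))).continuousOn.integrableOn_compact stmt13_compQ)
    have : ∀ m ∈ P, (∫ x in stmtQ, (c n * (starRingEnd ℂ) (c m)) * stmtE (n - m) x) =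
        if n = m then c n * (starRingEnd ℂ) (c m) else 0 := by
      intro m _
      rw [MeasureTheory.integral_const_mul, stmt13_orth]
      rcases eq_or_ne n m with rfl | h
      · simp
      · rw [if_neg (sub_ne_zero.mpr h), if_neg h, mul_zero]
    rw [Finset.sum_congr rfl this, Finset.sum_ite_eq P n (fun m => c n * (starRingEnd ℂ) (c m)), if_pos hn]
  rw [step1, step2, Complex.re_sum]
  exact Finset.sum_congr rfl fun n _ => (stmt13_norm_sq (c n)).symm

lemma stmt13_E_add (a b : ℤ × ℤ) (x : ℝ × ℝ) : stmtE a x * stmtE b x = stmtE (a + b) x := by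
  unfold stmtE
  rw [← Complex.exp_add]
  congr 1
  push_cast [Prod.fst_add, Prod.snd_add]
  ring

lemma stmt13_conv_eq (u v : ℤ × ℤ → ℂ) (A Bv : Finset (ℤ × ℤ))
    (hv : ∀ b ∉ Bv, v b = 0) (x : ℝ × ℝ) :
    (∑ n ∈ A + Bv, (∑ a ∈ A, u a * v (n - a)) * stmtE n x)
      = (∑ a ∈ A, u a * stmtE a x) * (∑ b ∈ Bv, v b * stmtE b x) := by
  have h1 : (∑ a ∈ A, u a * stmtE a x) * (∑ b ∈ Bv, v b * stmtE b x)
      = ∑ p ∈ A ×ˢ Bv, u p.1 * v p.2 * stmtE (p.1 + p.2) x := by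
    rw [Finset.sum_mul_sum, Finset.sum_product]
    refine Finset.sum_congr rfl fun a _ => Finset.sum_congr rfl fun b _ => ?_
    rw [← stmt13_E_add]
    ring
  have h2 : (∑ n ∈ A + Bv, (∑ a ∈ A, u a * v (n - a)) * stmtE n x)
      = ∑ p ∈ (A + Bv) ×ˢ A, u p.2 * v (p.1 - p.2) * stmtE p.1 x := by
    rw [Finset.sum_product]
    refine Finset.sum_congr rfl fun n _ => ?_
    rw [Finset.sum_mul]
  have himage : ((A ×ˢ Bv).image (fun p : (ℤ×ℤ)×(ℤ×ℤ) => (p.1 + p.2, p.1))) ⊆ (A + Bv) ×ˢ A := by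
    intro q hq
    simp only [Finset.mem_image] at hq
    obtain ⟨p, hp, rfl⟩ := hq
    rw [Finset.mem_product] at hp ⊢
    exact ⟨Finset.add_mem_add hp.1 hp.2, hp.1⟩
  have hinj : ∀ p ∈ A ×ˢ Bv, ∀ q ∈ A ×ˢ Bv,
      (fun p : (ℤ×ℤ)×(ℤ×ℤ) => (p.1 + p.2, p.1)) p = (fun p : (ℤ×ℤ)×(ℤ×ℤ) => (p.1 + p.2, p.1)) q → p = q := by
    intro p _ q _ h
    simp only [Prod.mk.injEq] at h
    obtain ⟨h1', h2'⟩ := h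
    have : p.2 = q.2 := by
      have := h1'
      rw [h2'] at this
      exact add_left_cancel this
    exact Prod.ext h2' this
  rw [h1, h2]
  have hvanish : ∀ q ∈ (A + Bv) ×ˢ A,
      q ∉ (A ×ˢ Bv).image (fun p : (ℤ×ℤ)×(ℤ×ℤ) => (p.1 + p.2, p.1)) →
      u q.2 * v (q.1 - q.2) * stmtE q.1 x = 0 := by
    intro q hq hnq
    rw [Finset.mem_product] at hq
    by_cases hvz : v (q.1 - q.2) = 0
    · rw [hvz]; ring
    · exfalso
      apply hnq
      rw [Finset.mem_image]
      refine ⟨(q.2, q.1 - q.2), ?_, ?_⟩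
      · rw [Finset.mem_product]
        refine ⟨hq.2, ?_⟩
        by_contra hmem
        exact hvz (hv _ hmem)
      · ext <;> simp
  rw [← Finset.sum_subset himage hvanish,
    Finset.sum_image (f := fun p : (ℤ×ℤ)×(ℤ×ℤ) => u p.2 * v (p.1 - p.2) * stmtE p.1 x) hinj]
  refine Finset.sum_congr rfl fun p _ => ?_
  simp [add_sub_cancel_left]

lemma stmt13_mult (u v : ℤ × ℤ → ℂ) (A Bv : Finset (ℤ × ℤ))
    (hv : ∀ b ∉ Bv, v b = 0) (S : ℝ)
    (hS : ∀ x : ℝ × ℝ, ‖∑ a ∈ A, u a * stmtE a x‖ ≤ S) (N : Finset (ℤ × ℤ)) :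
    (∑ n ∈ N, ‖∑ a ∈ A, u a * v (n - a)‖^2) ≤ S^2 * ∑ b ∈ Bv, ‖v b‖^2 := by
  set cf : ℤ × ℤ → ℂ := fun n => ∑ a ∈ A, u a * v (n - a) with hcf
  have hzero : ∀ n ∉ A + Bv, cf n = 0 := by
    intro n hn
    refine Finset.sum_eq_zero fun a ha => ?_
    by_cases hva : v (n - a) = 0
    · rw [hva, mul_zero]
    · exfalso
      apply hn
      have hmem : n - a ∈ Bv := by
        by_contra hmem
        exact hva (hv _ hmem)
      have := Finset.add_mem_add ha hmem
      rwa [add_sub_cancel] at this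
  have h1 : (∑ n ∈ N, ‖cf n‖^2) ≤ ∑ n ∈ A + Bv, ‖cf n‖^2 := by
    rw [← Finset.sum_filter_of_ne (p := fun n => n ∈ A + Bv)
      (fun n _ hne => by by_contra h; exact hne (by rw [hzero n h]; simp))]
    refine Finset.sum_le_sum_of_subset_of_nonneg
      (fun n hn => (Finset.mem_filter.mp hn).2) fun n _ _ => by positivity
  have hP := stmt13_parseval (A + Bv) cf
  have hV := stmt13_parseval Bv v
  have hpt : ∀ x ∈ stmtQ, ‖∑ n ∈ A + Bv, cf n * stmtE n x‖^2 ≤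
      S^2 * ‖∑ b ∈ Bv, v b * stmtE b x‖^2 := by
    intro x _
    rw [hcf, stmt13_conv_eq u v A Bv hv x, norm_mul, mul_pow]
    have h := hS x
    have h0 : (0:ℝ) ≤ ‖∑ a ∈ A, u a * stmtE a x‖ := norm_nonneg _
    exact mul_le_mul_of_nonneg_right (pow_le_pow_left₀ h0 h 2) (sq_nonneg _)
  have hint1 : IntegrableOn (fun x => ‖∑ n ∈ A + Bv, cf n * stmtE n x‖^2) stmtQ volume := by
    refine ContinuousOn.integrableOn_compact stmt13_compQ ?_
    exact ((continuous_finset_sum _ fun n _ => continuous_const.mul (stmt13_E_cont n)).norm.pow 2).continuousOn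
  have hint2 : IntegrableOn (fun x => S^2 * ‖∑ b ∈ Bv, v b * stmtE b x‖^2) stmtQ volume := by
    refine ContinuousOn.integrableOn_compact stmt13_compQ ?_
    exact (continuous_const.mul ((continuous_finset_sum _ fun n _ =>
      continuous_const.mul (stmt13_E_cont n)).norm.pow 2)).continuousOn
  calc (∑ n ∈ N, ‖cf n‖^2) ≤ ∑ n ∈ A + Bv, ‖cf n‖^2 := h1
    _ = ∫ x in stmtQ, ‖∑ n ∈ A + Bv, cf n * stmtE n x‖^2 := hP.symm
    _ ≤ ∫ x in stmtQ, S^2 * ‖∑ b ∈ Bv, v b * stmtE b x‖^2 :=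
        MeasureTheory.setIntegral_mono_on hint1 hint2 stmt13_measQ hpt
    _ = S^2 * ∫ x in stmtQ, ‖∑ b ∈ Bv, v b * stmtE b x‖^2 := MeasureTheory.integral_const_mul _ _
    _ = S^2 * ∑ b ∈ Bv, ‖v b‖^2 := by rw [hV]

lemma stmt13_nat_geom (q : ℝ) (hq0 : 0 ≤ q) (hq1 : q < 1) (B : Finset ℕ) :
    (∑ j ∈ B, q ^ j) ≤ (1 - q)⁻¹ := by
  have h := Summable.sum_le_tsum B (fun j _ => pow_nonneg hq0 j) (summable_geometric_of_lt_one hq0 hq1)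
  rwa [tsum_geometric_of_lt_one hq0 hq1] at h

lemma stmt13_geom (ρ : ℝ) (hρ : 1 < ρ) (M : ℤ) (A : Finset ℤ) (hA : ∀ k ∈ A, k ≤ M) :
    (∑ k ∈ A, ρ ^ k) ≤ ρ ^ M * (1 - ρ⁻¹)⁻¹ := by
  have hρ0 : (0:ℝ) < ρ := lt_trans one_pos hρ
  have hq0 : (0:ℝ) ≤ ρ⁻¹ := inv_nonneg.mpr hρ0.le
  have hq1 : ρ⁻¹ < 1 := inv_lt_one_of_one_lt₀ hρ
  have hterm : ∀ k ∈ A, ρ ^ k = ρ ^ M * (ρ⁻¹) ^ ((M - k).toNat) := by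
    intro k hk
    have hnn : (0:ℤ) ≤ M - k := sub_nonneg.mpr (hA k hk)
    have : ((M - k).toNat : ℤ) = M - k := Int.toNat_of_nonneg hnn
    rw [← zpow_natCast (ρ⁻¹) ((M - k).toNat), this, inv_zpow, ← zpow_neg, ← zpow_add₀ (ne_of_gt hρ0)]
    congr 1
    ring
  rw [Finset.sum_congr rfl hterm, ← Finset.mul_sum]
  have hinj : ∀ p ∈ A, ∀ q' ∈ A, (M - p).toNat = (M - q').toNat → p = q' := by
    intro p hp q' hq' h
    have h1 : ((M - p).toNat : ℤ) = M - p := Int.toNat_of_nonneg (sub_nonneg.mpr (hA p hp))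
    have h2 : ((M - q').toNat : ℤ) = M - q' := Int.toNat_of_nonneg (sub_nonneg.mpr (hA q' hq'))
    omega
  have himg : (∑ k ∈ A, (ρ⁻¹) ^ ((M - k).toNat))
      = ∑ j ∈ A.image (fun k => (M - k).toNat), (ρ⁻¹) ^ j := by
    rw [Finset.sum_image (f := fun j : ℕ => (ρ⁻¹) ^ j) hinj]
  rw [himg]
  exact mul_le_mul_of_nonneg_left (stmt13_nat_geom _ hq0 hq1 _) (zpow_nonneg hρ0.le M)

noncomputable def stmtW (ω : ℝ × ℝ) (n : ℤ × ℤ) : ℝ := ω.1 * (n.1 : ℝ) + ω.2 * (n.2 : ℝ)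

lemma stmtW_sub (ω : ℝ × ℝ) (n m : ℤ × ℤ) : stmtW ω (n - m) = stmtW ω n - stmtW ω m := by
  unfold stmtW
  push_cast [Prod.fst_sub, Prod.snd_sub]
  ring

lemma stmt13_zr (y : ℝ) (j : ℤ) : ((2:ℝ) ^ j) ^ y = ((2:ℝ) ^ y) ^ j := by
  rw [← Real.rpow_intCast 2 j, ← Real.rpow_mul (by norm_num), mul_comm,
    Real.rpow_mul (by norm_num), Real.rpow_intCast]

lemma stmt13_psi_sq (ψ : ℝ → ℝ) (hψrange : ∀ x, ψ x ∈ Set.Icc (0:ℝ) 1) (t : ℝ) (z : ℂ) :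
    ‖(ψ t : ℂ) * z‖^2 ≤ ‖z‖^2 := by
  rw [norm_mul, mul_pow]
  have h1 : ‖((ψ t : ℝ) : ℂ)‖ ≤ 1 := by
    rw [Complex.norm_real]
    rw [Real.norm_eq_abs, abs_of_nonneg (hψrange t).1]
    exact (hψrange t).2
  have h2 : ‖((ψ t : ℝ) : ℂ)‖^2 ≤ 1 := by nlinarith [norm_nonneg ((ψ t : ℝ) : ℂ)]
  nlinarith [sq_nonneg (‖z‖)]

lemma stmt13_band (ω : ℝ × ℝ) (s : ℝ) (hspos : 0 < s) (ψ : ℝ → ℝ)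
    (hψrange : ∀ x, ψ x ∈ Set.Icc (0:ℝ) 1) (hψ0 : ∀ x : ℝ, x ≤ 1/2 → ψ x = 0)
    (u g : ℤ × ℤ → ℂ) (Ff Fg : Finset (ℤ × ℤ)) (hu : ∀ a, u a ≠ 0 → stmtW ω a < 0)
    (hg : ∀ b ∉ Fg, g b = 0) (S : ℝ)
    (hS : ∀ x : ℝ × ℝ, ‖∑ a ∈ Ff, u a * stmtE a x‖ ≤ S) (P : Finset (ℤ × ℤ)) :
    (∑ n ∈ P, |stmtW ω n| ^ (2*s) * ‖((ψ (stmtW ω n) : ℝ) : ℂ) * ∑ a ∈ Ff, u a * g (n - a)‖^2)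
      ≤ ((2:ℝ)^(2*s) * (1 - ((2:ℝ)^(2*s))⁻¹)⁻¹) * (S^2 * ∑ b ∈ Fg, |stmtW ω b| ^ (2*s) * ‖g b‖^2) := by
  classical
  set ρ : ℝ := (2:ℝ)^(2*s) with hρdef
  have h2s : (0:ℝ) < 2*s := by linarith
  have hρ1 : (1:ℝ) < ρ := by
    rw [hρdef]
    have := Real.one_lt_rpow_iff_of_pos (show (0:ℝ) < 2 by norm_num) (y := 2*s)
    exact this.mpr (Or.inl ⟨one_lt_two, h2s⟩)
  have hρ0 : (0:ℝ) < ρ := lt_trans one_pos hρ1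
  have hinv1 : ρ⁻¹ < 1 := inv_lt_one_of_one_lt₀ hρ1
  have hinv0 : (0:ℝ) < 1 - ρ⁻¹ := by linarith
  set w : ℤ × ℤ → ℝ := stmtW ω with hwdef
  set term : ℤ × ℤ → ℝ :=
    fun n => |w n| ^ (2*s) * ‖((ψ (w n) : ℝ) : ℂ) * ∑ a ∈ Ff, u a * g (n - a)‖^2 with hterm
  have htermnn : ∀ n, 0 ≤ term n := fun n => mul_nonneg (Real.rpow_nonneg (abs_nonneg _) _) (sq_nonneg _)
  set P' : Finset (ℤ × ℤ) := P.filter (fun n => (1:ℝ)/2 < w n) with hP'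
  have hTfilter : (∑ n ∈ P, term n) = ∑ n ∈ P', term n := by
    rw [hP']
    refine (Finset.sum_filter_of_ne fun n _ hne => ?_).symm
    by_contra hle
    push_neg at hle
    apply hne
    rw [hterm]
    simp only [hψ0 (w n) hle, Complex.ofReal_zero, zero_mul, norm_zero]
    ring
  set klog : ℤ × ℤ → ℤ := fun n => Int.log 2 (w n) with hklog
  set K : Finset ℤ := P'.image klog with hK
  have hfiber : (∑ n ∈ P', term n) = ∑ k ∈ K, ∑ n ∈ P'.filter (fun n => klog n = k), term n :=
    (Finset.sum_fiberwise_of_maps_to (fun n hn => Finset.mem_image_of_mem klog hn) term).symm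
  -- band bound for each k
  have hbandbound : ∀ k ∈ K, (∑ n ∈ P'.filter (fun n => klog n = k), term n)
      ≤ ρ^(k+1) * (S^2 * ∑ b ∈ Fg, (if (2:ℝ)^k ≤ w b then ‖g b‖^2 else 0)) := by
    intro k _
    set Fk := P'.filter (fun n => klog n = k) with hFk
    set gk : ℤ × ℤ → ℂ := fun m => if (2:ℝ)^k ≤ w m then g m else 0 with hgk
    have hband : ∀ n ∈ Fk, (2:ℝ)^k ≤ w n ∧ w n < 2^(k+1) ∧ 0 < w n := by
      intro n hn
      rw [hFk, Finset.mem_filter] at hn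
      obtain ⟨hn1, hn2⟩ := hn
      rw [hP', Finset.mem_filter] at hn1
      have hpos : 0 < w n := lt_trans (by norm_num) hn1.2
      have h1 := Int.zpow_log_le_self (b := 2) one_lt_two hpos
      have h2 := Int.lt_zpow_succ_log_self (b := 2) one_lt_two (w n)
      have hn2' : Int.log 2 (w n) = k := hn2
      rw [hn2'] at h1 h2
      push_cast at h1 h2
      exact ⟨h1, h2, hpos⟩
    -- rewrite convolution with gk
    have hconv : ∀ n ∈ Fk, (∑ a ∈ Ff, u a * g (n - a)) = ∑ a ∈ Ff, u a * gk (n - a) := by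
      intro n hn
      refine Finset.sum_congr rfl fun a _ => ?_
      rcases eq_or_ne (u a) 0 with h0 | h0
      · rw [h0, zero_mul, zero_mul]
      · have hwa : w a < 0 := hu a h0
        have hge : (2:ℝ)^k ≤ w (n - a) := by
          rw [hwdef, stmtW_sub]
          have := (hband n hn).1
          rw [← hwdef] at *
          linarith
        rw [hgk]
        simp only [if_pos hge]
    have hstep1 : (∑ n ∈ Fk, term n) ≤ ρ^(k+1) * ∑ n ∈ Fk, ‖∑ a ∈ Ff, u a * gk (n - a)‖^2 := by
      rw [Finset.mul_sum]
      refine Finset.sum_le_sum fun n hn => ?_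
      have hb := hband n hn
      have hw1 : |w n| ^ (2*s) ≤ ρ^(k+1) := by
        rw [abs_of_pos hb.2.2]
        calc (w n) ^ (2*s) ≤ ((2:ℝ)^(k+1)) ^ (2*s) :=
              Real.rpow_le_rpow hb.2.2.le hb.2.1.le h2s.le
          _ = ρ^(k+1) := by rw [stmt13_zr (2*s) (k+1), hρdef]
      show term n ≤ ρ^(k+1) * ‖∑ a ∈ Ff, u a * gk (n - a)‖^2
      rw [← hconv n hn]
      calc term n ≤ |w n| ^ (2*s) * ‖∑ a ∈ Ff, u a * g (n - a)‖^2 :=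
            mul_le_mul_of_nonneg_left (stmt13_psi_sq ψ hψrange _ _) (Real.rpow_nonneg (abs_nonneg _) _)
        _ ≤ ρ^(k+1) * ‖∑ a ∈ Ff, u a * g (n - a)‖^2 :=
            mul_le_mul_of_nonneg_right hw1 (sq_nonneg _)
    have hgk0 : ∀ b ∉ Fg, gk b = 0 := by
      intro b hb
      by_cases hc : (2:ℝ)^k ≤ w b
      · rw [show gk b = g b from if_pos hc, hg b hb]
      · exact if_neg hc
    have hstep2 := stmt13_mult u gk Ff Fg hgk0 S hS Fk
    have hstep3 : (∑ b ∈ Fg, ‖gk b‖^2) = ∑ b ∈ Fg, (if (2:ℝ)^k ≤ w b then ‖g b‖^2 else 0) := by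
      refine Finset.sum_congr rfl fun b _ => ?_
      by_cases hc : (2:ℝ)^k ≤ w b
      · rw [show gk b = g b from if_pos hc, if_pos hc]
      · rw [show gk b = 0 from if_neg hc, if_neg hc, norm_zero]
        norm_num
    calc (∑ n ∈ Fk, term n) ≤ ρ^(k+1) * ∑ n ∈ Fk, ‖∑ a ∈ Ff, u a * gk (n - a)‖^2 := hstep1
      _ ≤ ρ^(k+1) * (S^2 * ∑ b ∈ Fg, ‖gk b‖^2) :=
          mul_le_mul_of_nonneg_left hstep2 (zpow_nonneg hρ0.le _)
      _ = ρ^(k+1) * (S^2 * ∑ b ∈ Fg, (if (2:ℝ)^k ≤ w b then ‖g b‖^2 else 0)) := by rw [hstep3]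
  -- sum over bands and swap
  have hswap : (∑ k ∈ K, ρ^(k+1) * (S^2 * ∑ b ∈ Fg, (if (2:ℝ)^k ≤ w b then ‖g b‖^2 else 0)))
      = S^2 * ∑ b ∈ Fg, (∑ k ∈ K, (if (2:ℝ)^k ≤ w b then ρ^(k+1) else 0)) * ‖g b‖^2 := by
    have h1 : ∀ k : ℤ, ρ^(k+1) * (S^2 * ∑ b ∈ Fg, (if (2:ℝ)^k ≤ w b then ‖g b‖^2 else 0))
        = S^2 * ∑ b ∈ Fg, (if (2:ℝ)^k ≤ w b then ρ^(k+1) * ‖g b‖^2 else 0) := by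
      intro k
      rw [mul_left_comm]
      congr 1
      rw [Finset.mul_sum]
      refine Finset.sum_congr rfl fun b _ => ?_
      rw [mul_ite, mul_zero]
    calc (∑ k ∈ K, ρ^(k+1) * (S^2 * ∑ b ∈ Fg, (if (2:ℝ)^k ≤ w b then ‖g b‖^2 else 0)))
        = ∑ k ∈ K, S^2 * ∑ b ∈ Fg, (if (2:ℝ)^k ≤ w b then ρ^(k+1) * ‖g b‖^2 else 0) :=
          Finset.sum_congr rfl fun k _ => h1 k
      _ = S^2 * ∑ k ∈ K, ∑ b ∈ Fg, (if (2:ℝ)^k ≤ w b then ρ^(k+1) * ‖g b‖^2 else 0) :=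
          (Finset.mul_sum _ _ _).symm
      _ = S^2 * ∑ b ∈ Fg, ∑ k ∈ K, (if (2:ℝ)^k ≤ w b then ρ^(k+1) * ‖g b‖^2 else 0) := by
          rw [Finset.sum_comm]
      _ = S^2 * ∑ b ∈ Fg, (∑ k ∈ K, (if (2:ℝ)^k ≤ w b then ρ^(k+1) else 0)) * ‖g b‖^2 := by
          congr 1
          refine Finset.sum_congr rfl fun b _ => ?_
          rw [Finset.sum_mul]
          refine Finset.sum_congr rfl fun k _ => ?_
          rw [ite_mul, zero_mul]
  have hgeo : ∀ b ∈ Fg, (∑ k ∈ K, (if (2:ℝ)^k ≤ w b then ρ^(k+1) else 0))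
      ≤ (ρ * (1-ρ⁻¹)⁻¹) * |w b|^(2*s) := by
    intro b _
    rw [← Finset.sum_filter]
    set K' := K.filter (fun k => (2:ℝ)^k ≤ w b) with hK'
    by_cases hne : K'.Nonempty
    · obtain ⟨k₀, hk₀⟩ := hne
      have hwb : 0 < w b :=
        lt_of_lt_of_le (zpow_pos (by norm_num : (0:ℝ) < 2) k₀) (Finset.mem_filter.mp hk₀).2
      have hle : ∀ k ∈ K', k ≤ Int.log 2 (w b) := by
        intro k hk
        have h := (Finset.mem_filter.mp hk).2
        have h' : ((2:ℕ):ℝ)^k ≤ w b := by push_cast; exact h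
        exact (Int.zpow_le_iff_le_log one_lt_two hwb).mp h'
      have hrlog : ρ^(Int.log 2 (w b)) ≤ |w b|^(2*s) := by
        rw [hρdef, ← stmt13_zr (2*s) (Int.log 2 (w b)), abs_of_pos hwb]
        refine Real.rpow_le_rpow (zpow_nonneg (by norm_num) _) ?_ h2s.le
        have h2 := Int.zpow_log_le_self (b := 2) one_lt_two hwb
        push_cast at h2
        exact h2
      calc (∑ k ∈ K', ρ^(k+1)) = ρ * ∑ k ∈ K', ρ^k := by
            rw [Finset.mul_sum]
            refine Finset.sum_congr rfl fun k _ => ?_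
            rw [zpow_add_one₀ (ne_of_gt hρ0)]
            ring
        _ ≤ ρ * (ρ^(Int.log 2 (w b)) * (1 - ρ⁻¹)⁻¹) :=
            mul_le_mul_of_nonneg_left (stmt13_geom ρ hρ1 _ K' hle) hρ0.le
        _ ≤ ρ * (|w b|^(2*s) * (1 - ρ⁻¹)⁻¹) := by
            refine mul_le_mul_of_nonneg_left ?_ hρ0.le
            exact mul_le_mul_of_nonneg_right hrlog (inv_nonneg.mpr hinv0.le)
        _ = (ρ * (1-ρ⁻¹)⁻¹) * |w b|^(2*s) := by ring
    · rw [Finset.not_nonempty_iff_eq_empty.mp hne, Finset.sum_empty]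
      exact mul_nonneg (mul_nonneg hρ0.le (inv_nonneg.mpr hinv0.le))
        (Real.rpow_nonneg (abs_nonneg _) _)
  calc (∑ n ∈ P, term n)
      = ∑ k ∈ K, ∑ n ∈ P'.filter (fun n => klog n = k), term n := by rw [hTfilter, hfiber]
    _ ≤ ∑ k ∈ K, ρ^(k+1) * (S^2 * ∑ b ∈ Fg, (if (2:ℝ)^k ≤ w b then ‖g b‖^2 else 0)) :=
        Finset.sum_le_sum hbandbound
    _ = S^2 * ∑ b ∈ Fg, (∑ k ∈ K, (if (2:ℝ)^k ≤ w b then ρ^(k+1) else 0)) * ‖g b‖^2 := hswap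
    _ ≤ S^2 * ∑ b ∈ Fg, ((ρ * (1-ρ⁻¹)⁻¹) * |w b|^(2*s)) * ‖g b‖^2 := by
        refine mul_le_mul_of_nonneg_left ?_ (sq_nonneg S)
        exact Finset.sum_le_sum fun b hb => mul_le_mul_of_nonneg_right (hgeo b hb) (sq_nonneg _)
    _ = (ρ * (1 - ρ⁻¹)⁻¹) * (S^2 * ∑ b ∈ Fg, |w b|^(2*s) * ‖g b‖^2) := by
        rw [Finset.mul_sum, Finset.mul_sum, Finset.mul_sum]
        refine Finset.sum_congr rfl fun b _ => ?_
        ring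

lemma stmt13_E_norm (n : ℤ × ℤ) (x : ℝ × ℝ) : ‖stmtE n x‖ = 1 := by
  rw [stmtE, Complex.norm_exp]
  have h : (2 * (Real.pi:ℂ) * Complex.I * (((n.1:ℝ) * x.1 + (n.2:ℝ) * x.2 : ℝ):ℂ)).re = 0 := by
    simp [Complex.mul_re, Complex.mul_im]
  rw [h, Real.exp_zero]

lemma stmt13_final (T B S C : ℝ) (hT : 0 ≤ T) (hB : 0 ≤ B) (hS : 0 ≤ S) (hC : 0 ≤ C)
    (h : T ≤ C^2 * (S^2 * B)) : T ^ ((1:ℝ)/2) ≤ C * S * B ^ ((1:ℝ)/2) := by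
  have h1 : T ^ ((1:ℝ)/2) ≤ (C^2 * (S^2 * B)) ^ ((1:ℝ)/2) :=
    Real.rpow_le_rpow hT h (by norm_num)
  refine h1.trans (le_of_eq ?_)
  rw [Real.mul_rpow (by positivity) (by positivity), Real.mul_rpow (by positivity) hB]
  have hCs : ((C:ℝ)^2) ^ ((1:ℝ)/2) = C := by
    rw [← Real.rpow_natCast C 2, ← Real.rpow_mul hC]
    norm_num
  have hSs : ((S:ℝ)^2) ^ ((1:ℝ)/2) = S := by
    rw [← Real.rpow_natCast S 2, ← Real.rpow_mul hS]
    norm_num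
  rw [hCs, hSs, mul_assoc]


/-- first paraproduct estimate, Lemma 5.9, on the Fourier side:
`‖|∂_x|^s P_{+hi}(P₋(f)g)‖_{L²(𝕋²)} ≲ ‖P₋f‖_{L^∞} ‖|∂_x|^s g‖_{L²(𝕋²)}`, where
`h(n) = ψ(ω·n)·Σ_{ω·a<0} f̂(a)ĝ(n−a)` are the coefficients of the paraproduct. -/
theorem stmt_13 (ω : ℝ × ℝ) (s : ℝ) (hs : 0 ≤ s)
    (ψ : ℝ → ℝ) (hψsmooth : ContDiff ℝ (⊤ : ℕ∞) ψ) (hψrange : ∀ x, ψ x ∈ Set.Icc (0 : ℝ) 1)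
    (hψ1 : ∀ x : ℝ, 2 ≤ x → ψ x = 1) (hψ0 : ∀ x : ℝ, x ≤ 1 / 2 → ψ x = 0) :
    ∃ C : ℝ, ∀ f g : ℤ × ℤ → ℂ,
      (Function.support f).Finite → (Function.support g).Finite →
      (∑' n : ℤ × ℤ, |ω.1 * (n.1 : ℝ) + ω.2 * (n.2 : ℝ)| ^ (2 * s) *
          ‖(ψ (ω.1 * (n.1 : ℝ) + ω.2 * (n.2 : ℝ)) : ℂ) *
            ∑' a : ℤ × ℤ,
              (if ω.1 * (a.1 : ℝ) + ω.2 * (a.2 : ℝ) < 0 then f a * g (n - a) else 0)‖ ^ 2)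
          ^ ((1 : ℝ) / 2) ≤
        C * (⨆ x : ℝ × ℝ,
            ‖∑' a : ℤ × ℤ,
                (if ω.1 * (a.1 : ℝ) + ω.2 * (a.2 : ℝ) < 0 then
                  f a * Complex.exp (2 * Real.pi * Complex.I *
                    (((a.1 : ℝ) * x.1 + (a.2 : ℝ) * x.2 : ℝ) : ℂ))
                else 0)‖) *
          (∑' n : ℤ × ℤ,
              |ω.1 * (n.1 : ℝ) + ω.2 * (n.2 : ℝ)| ^ (2 * s) * ‖g n‖ ^ 2) ^ ((1 : ℝ) / 2) := by

  classical
  set ρ : ℝ := (2:ℝ) ^ (2*s) with hρdef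
  set C₁ : ℝ := ρ * (1 - ρ⁻¹)⁻¹ with hC₁def
  refine ⟨max 1 (C₁ ^ ((1:ℝ)/2)), ?_⟩
  intro f g hf hg
  set C : ℝ := max 1 (C₁ ^ ((1:ℝ)/2)) with hCdef
  have hC0 : 0 ≤ C := le_trans zero_le_one (le_max_left _ _)
  set Ff := hf.toFinset with hFfdef
  set Fg := hg.toFinset with hFgdef
  set u : ℤ × ℤ → ℂ := fun a => if stmtW ω a < 0 then f a else 0 with hu
  have huprop : ∀ a, u a ≠ 0 → stmtW ω a < 0 := by
    intro a ha
    by_contra h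
    exact ha (if_neg h)
  have husupp : ∀ a ∉ Ff, u a = 0 := by
    intro a ha
    have hfa : f a = 0 := by
      rwa [Set.Finite.mem_toFinset, Function.mem_support, not_not] at ha
    by_cases hc : stmtW ω a < 0
    · rw [show u a = f a from if_pos hc, hfa]
    · exact if_neg hc
  have hgsupp : ∀ b ∉ Fg, g b = 0 := by
    intro b hb
    rwa [Set.Finite.mem_toFinset, Function.mem_support, not_not] at hb
  set P : Finset (ℤ × ℤ) := Ff + Fg with hPdef
  have hinner : ∀ n : ℤ × ℤ,
      (∑' a : ℤ × ℤ, (if ω.1 * (a.1 : ℝ) + ω.2 * (a.2 : ℝ) < 0 then f a * g (n - a) else 0))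
        = ∑ a ∈ Ff, u a * g (n - a) := by
    intro n
    rw [tsum_eq_sum (s := Ff) ?_]
    · refine Finset.sum_congr rfl fun a _ => ?_
      show (if stmtW ω a < 0 then f a * g (n - a) else 0) = u a * g (n - a)
      by_cases hc : stmtW ω a < 0
      · rw [if_pos hc, show u a = f a from if_pos hc]
      · rw [if_neg hc, show u a = 0 from if_neg hc, zero_mul]
    · intro a ha
      have hfa : f a = 0 := by
        rwa [Set.Finite.mem_toFinset, Function.mem_support, not_not] at ha
      rw [hfa]
      simp
  have hczero : ∀ n ∉ P, (∑ a ∈ Ff, u a * g (n - a)) = 0 := by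
    intro n hn
    refine Finset.sum_eq_zero fun a ha => ?_
    by_cases hga : g (n - a) = 0
    · rw [hga, mul_zero]
    · exfalso
      apply hn
      have hb : n - a ∈ Fg := by
        by_contra hb
        exact hga (hgsupp _ hb)
      have := Finset.add_mem_add ha hb
      rwa [add_sub_cancel] at this
  set T : ℝ := ∑ n ∈ P,
    |stmtW ω n| ^ (2*s) * ‖((ψ (stmtW ω n) : ℝ) : ℂ) * ∑ a ∈ Ff, u a * g (n - a)‖^2 with hTdef
  have hT0 : 0 ≤ T :=
    Finset.sum_nonneg fun n _ => mul_nonneg (Real.rpow_nonneg (abs_nonneg _) _) (sq_nonneg _)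
  have hLHS : (∑' n : ℤ × ℤ, |ω.1 * (n.1 : ℝ) + ω.2 * (n.2 : ℝ)| ^ (2 * s) *
      ‖(ψ (ω.1 * (n.1 : ℝ) + ω.2 * (n.2 : ℝ)) : ℂ) *
        ∑' a : ℤ × ℤ,
          (if ω.1 * (a.1 : ℝ) + ω.2 * (a.2 : ℝ) < 0 then f a * g (n - a) else 0)‖ ^ 2) = T := by
    have h1 : ∀ n : ℤ × ℤ, |ω.1 * (n.1 : ℝ) + ω.2 * (n.2 : ℝ)| ^ (2 * s) *
        ‖(ψ (ω.1 * (n.1 : ℝ) + ω.2 * (n.2 : ℝ)) : ℂ) *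
          ∑' a : ℤ × ℤ,
            (if ω.1 * (a.1 : ℝ) + ω.2 * (a.2 : ℝ) < 0 then f a * g (n - a) else 0)‖ ^ 2
        = |stmtW ω n| ^ (2*s) * ‖((ψ (stmtW ω n) : ℝ) : ℂ) * ∑ a ∈ Ff, u a * g (n - a)‖^2 := by
      intro n
      rw [hinner n]
      rfl
    rw [tsum_congr h1]
    refine tsum_eq_sum ?_
    intro n hn
    rw [hczero n hn, mul_zero, norm_zero]
    ring
  set B : ℝ := ∑ b ∈ Fg, |stmtW ω b| ^ (2*s) * ‖g b‖^2 with hBdef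
  have hB0 : 0 ≤ B :=
    Finset.sum_nonneg fun n _ => mul_nonneg (Real.rpow_nonneg (abs_nonneg _) _) (sq_nonneg _)
  have hRHS : (∑' n : ℤ × ℤ, |ω.1 * (n.1 : ℝ) + ω.2 * (n.2 : ℝ)| ^ (2 * s) * ‖g n‖ ^ 2) = B := by
    refine tsum_eq_sum ?_
    intro b hb
    rw [hgsupp b hb]
    simp
  set S : ℝ := ⨆ x : ℝ × ℝ,
      ‖∑' a : ℤ × ℤ,
          (if ω.1 * (a.1 : ℝ) + ω.2 * (a.2 : ℝ) < 0 then
            f a * Complex.exp (2 * Real.pi * Complex.I *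
              (((a.1 : ℝ) * x.1 + (a.2 : ℝ) * x.2 : ℝ) : ℂ))
          else 0)‖ with hSdef
  have hSbody : ∀ x : ℝ × ℝ,
      (∑' a : ℤ × ℤ,
          (if ω.1 * (a.1 : ℝ) + ω.2 * (a.2 : ℝ) < 0 then
            f a * Complex.exp (2 * Real.pi * Complex.I *
              (((a.1 : ℝ) * x.1 + (a.2 : ℝ) * x.2 : ℝ) : ℂ))
          else 0)) = ∑ a ∈ Ff, u a * stmtE a x := by
    intro x
    rw [tsum_eq_sum (s := Ff) ?_]
    · refine Finset.sum_congr rfl fun a _ => ?_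
      show (if stmtW ω a < 0 then f a * stmtE a x else 0) = u a * stmtE a x
      by_cases hc : stmtW ω a < 0
      · rw [if_pos hc, show u a = f a from if_pos hc]
      · rw [if_neg hc, show u a = 0 from if_neg hc, zero_mul]
    · intro a ha
      have hfa : f a = 0 := by
        rwa [Set.Finite.mem_toFinset, Function.mem_support, not_not] at ha
      rw [hfa]
      simp
  have hS0 : 0 ≤ S := Real.iSup_nonneg fun x => norm_nonneg _
  have hS : ∀ x : ℝ × ℝ, ‖∑ a ∈ Ff, u a * stmtE a x‖ ≤ S := by
    intro x
    have hbdd : BddAbove (Set.range fun x : ℝ × ℝ =>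
        ‖∑' a : ℤ × ℤ,
            (if ω.1 * (a.1 : ℝ) + ω.2 * (a.2 : ℝ) < 0 then
              f a * Complex.exp (2 * Real.pi * Complex.I *
                (((a.1 : ℝ) * x.1 + (a.2 : ℝ) * x.2 : ℝ) : ℂ))
            else 0)‖) := by
      refine ⟨∑ a ∈ Ff, ‖f a‖, ?_⟩
      rintro r ⟨y, rfl⟩
      simp only [hSbody]
      refine (norm_sum_le _ _).trans (Finset.sum_le_sum fun a _ => ?_)
      rw [norm_mul, stmt13_E_norm, mul_one]
      by_cases hc : stmtW ω a < 0
      · rw [show u a = f a from if_pos hc]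
      · rw [show u a = 0 from if_neg hc, norm_zero]
        exact norm_nonneg _
    have := le_ciSup hbdd x
    rwa [hSbody x] at this
  have hkey : T ≤ C^2 * (S^2 * B) := by
    rcases eq_or_lt_of_le hs with hs0 | hspos
    · have h2s : 2*s = 0 := by rw [← hs0]; ring
      have hT1 : T ≤ ∑ n ∈ P, ‖∑ a ∈ Ff, u a * g (n - a)‖^2 := by
        refine Finset.sum_le_sum fun n _ => ?_
        rw [h2s, Real.rpow_zero, one_mul]
        exact stmt13_psi_sq ψ hψrange _ _
      have hT2 := stmt13_mult u g Ff Fg hgsupp S hS P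
      have hBeq : B = ∑ b ∈ Fg, ‖g b‖^2 := by
        rw [hBdef]
        refine Finset.sum_congr rfl fun b _ => ?_
        rw [h2s, Real.rpow_zero, one_mul]
      have hC2 : 1 ≤ C^2 := by
        have h1 : (1:ℝ) ≤ C := le_max_left _ _
        nlinarith
      calc T ≤ S^2 * B := by rw [hBeq]; exact hT1.trans hT2
        _ ≤ C^2 * (S^2 * B) := le_mul_of_one_le_left (mul_nonneg (sq_nonneg S) hB0) hC2
    · have hband := stmt13_band ω s hspos ψ hψrange hψ0 u g Ff Fg huprop hgsupp S hS P
      have h2s : (0:ℝ) < 2*s := by linarith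
      have hρ1 : (1:ℝ) < ρ := by
        rw [hρdef]
        exact (Real.one_lt_rpow_iff_of_pos (show (0:ℝ) < 2 by norm_num)).mpr
          (Or.inl ⟨one_lt_two, h2s⟩)
      have hρ0 : (0:ℝ) < ρ := lt_trans one_pos hρ1
      have hinv1 : ρ⁻¹ < 1 := inv_lt_one_of_one_lt₀ hρ1
      have hinv0 : (0:ℝ) < 1 - ρ⁻¹ := by linarith
      have hC₁0 : 0 ≤ C₁ := mul_nonneg hρ0.le (inv_nonneg.mpr hinv0.le)
      have hC₁C : C₁ ≤ C^2 := by
        have hhalf : (C₁ ^ ((1:ℝ)/2))^2 = C₁ := by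
          rw [← Real.rpow_natCast (C₁ ^ ((1:ℝ)/2)) 2, ← Real.rpow_mul hC₁0]
          norm_num
        calc C₁ = (C₁ ^ ((1:ℝ)/2))^2 := hhalf.symm
          _ ≤ C^2 := pow_le_pow_left₀ (Real.rpow_nonneg hC₁0 _) (le_max_right _ _) 2
      calc T ≤ C₁ * (S^2 * B) := hband
        _ ≤ C^2 * (S^2 * B) :=
            mul_le_mul_of_nonneg_right hC₁C (mul_nonneg (sq_nonneg S) hB0)
  rw [hLHS, hRHS]
  exact stmt13_final T B S C hT0 hB0 hS0 hC0 hkey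
end

section
/- Let 0 < c ≤ 1, let s ≥ 0 be real, and let m : ℝ² → ℂ be smooth with support contained in the set S = {(ξ₁, ξ₂) : |ξ₂| ≥ c(|ξ₁|+|ξ₂|), |ξ₁+ξ₂| ≥ c(|ξ₁|+|ξ₂|), and |ξ₁|+|ξ₂| ≥ 1/8}, and suppose m satisfies Coifman–Meyer bounds: for every (a, b) ∈ ℕ² there is a constant C with |∂₁^a ∂₂^b m(ξ₁, ξ₂)| ≤ C·(|ξ₁|+|ξ₂|)^{−(a+b)} for all (ξ₁, ξ₂) ≠ (0,0). Define m̃ : ℝ² → ℂ by m̃(ξ₁, ξ₂) = |ξ₁+ξ₂|^s·|ξ₂|^{−s}·m(ξ₁, ξ₂) when ξ₂ ≠ 0 and ξ₁+ξ₂ ≠ 0, and m̃(ξ₁, ξ₂) = 0 otherwise. Then m̃ is smooth on ℝ² and satisfies the same type of bounds: for every (a, b) ∈ ℕ² there is a constant C' with |∂₁^a ∂₂^b m̃(ξ₁, ξ₂)| ≤ C'·(|ξ₁|+|ξ₂|)^{−(a+b)} for all (ξ₁, ξ₂) ≠ (0,0). -/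
/-- The partial derivative in the first coordinate of a (complex-valued)
function on `ℝ²`. -/
noncomputable def pd1 (f : ℝ × ℝ → ℂ) : ℝ × ℝ → ℂ :=
  fun ξ => deriv (fun t => f (t, ξ.2)) ξ.1

/-- The partial derivative in the second coordinate of a (complex-valued)
function on `ℝ²`. -/
noncomputable def pd2 (f : ℝ × ℝ → ℂ) : ℝ × ℝ → ℂ :=
  fun ξ => deriv (fun t => f (ξ.1, t)) ξ.2

namespace Stmt16

lemma hasDerivAt_aux1 {f : ℝ × ℝ → ℂ} {ξ : ℝ × ℝ} (hf : DifferentiableAt ℝ f ξ) :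
    HasDerivAt (fun t => f (t, ξ.2)) (fderiv ℝ f ξ ((1:ℝ), (0:ℝ))) ξ.1 := by
  have hline : HasDerivAt (fun t : ℝ => (t, ξ.2)) ((1:ℝ), (0:ℝ)) ξ.1 :=
    (hasDerivAt_id ξ.1).prodMk (hasDerivAt_const _ _)
  have hfd : HasFDerivAt f (fderiv ℝ f ξ) ((ξ.1, ξ.2)) := by
    simpa using hf.hasFDerivAt
  exact hfd.comp_hasDerivAt ξ.1 hline

lemma hasDerivAt_aux2 {f : ℝ × ℝ → ℂ} {ξ : ℝ × ℝ} (hf : DifferentiableAt ℝ f ξ) :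
    HasDerivAt (fun t => f (ξ.1, t)) (fderiv ℝ f ξ ((0:ℝ), (1:ℝ))) ξ.2 := by
  have hline : HasDerivAt (fun t : ℝ => (ξ.1, t)) ((0:ℝ), (1:ℝ)) ξ.2 :=
    (hasDerivAt_const _ _).prodMk (hasDerivAt_id ξ.2)
  have hfd : HasFDerivAt f (fderiv ℝ f ξ) ((ξ.1, ξ.2)) := by
    simpa using hf.hasFDerivAt
  exact hfd.comp_hasDerivAt ξ.2 hline

lemma pd1_eq {f : ℝ × ℝ → ℂ} {ξ : ℝ × ℝ} (hf : DifferentiableAt ℝ f ξ) :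
    pd1 f ξ = fderiv ℝ f ξ ((1:ℝ), (0:ℝ)) := (hasDerivAt_aux1 hf).deriv

lemma pd2_eq {f : ℝ × ℝ → ℂ} {ξ : ℝ × ℝ} (hf : DifferentiableAt ℝ f ξ) :
    pd2 f ξ = fderiv ℝ f ξ ((0:ℝ), (1:ℝ)) := (hasDerivAt_aux2 hf).deriv

lemma pd1_hasDerivAt {f : ℝ × ℝ → ℂ} {ξ : ℝ × ℝ} (hf : DifferentiableAt ℝ f ξ) :
    HasDerivAt (fun t => f (t, ξ.2)) (pd1 f ξ) ξ.1 := by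
  rw [pd1_eq hf]; exact hasDerivAt_aux1 hf

lemma pd2_hasDerivAt {f : ℝ × ℝ → ℂ} {ξ : ℝ × ℝ} (hf : DifferentiableAt ℝ f ξ) :
    HasDerivAt (fun t => f (ξ.1, t)) (pd2 f ξ) ξ.2 := by
  rw [pd2_eq hf]; exact hasDerivAt_aux2 hf

lemma contDiff_pd1 {f : ℝ × ℝ → ℂ} (hf : ContDiff ℝ (⊤ : ℕ∞) f) : ContDiff ℝ (⊤ : ℕ∞) (pd1 f) := by
  have : pd1 f = fun ξ => fderiv ℝ f ξ ((1:ℝ), (0:ℝ)) :=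
    funext fun ξ => pd1_eq ((hf.differentiable (by simp)) ξ)
  rw [this]
  exact (hf.fderiv_right (by simp)).clm_apply contDiff_const

lemma contDiff_pd2 {f : ℝ × ℝ → ℂ} (hf : ContDiff ℝ (⊤ : ℕ∞) f) : ContDiff ℝ (⊤ : ℕ∞) (pd2 f) := by
  have : pd2 f = fun ξ => fderiv ℝ f ξ ((0:ℝ), (1:ℝ)) :=
    funext fun ξ => pd2_eq ((hf.differentiable (by simp)) ξ)
  rw [this]
  exact (hf.fderiv_right (by simp)).clm_apply contDiff_const

lemma contDiff_pdIter {m : ℝ × ℝ → ℂ} (hm : ContDiff ℝ (⊤ : ℕ∞) m) (a b : ℕ) :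
    ContDiff ℝ (⊤ : ℕ∞) (pd1^[a] (pd2^[b] m)) := by
  have hb : ContDiff ℝ (⊤ : ℕ∞) (pd2^[b] m) := by
    induction b with
    | zero => simpa using hm
    | succ b ih => rw [Function.iterate_succ_apply']; exact contDiff_pd2 ih
  induction a with
  | zero => simpa using hb
  | succ a ih => rw [Function.iterate_succ_apply']; exact contDiff_pd1 ih

noncomputable def pw (p : ℝ) (e : Bool) (x : ℝ) : ℝ := (x^2)^p * x^(cond e 1 0 : ℕ)

lemma sq_rpow_eq_abs (x t : ℝ) : (x^2) ^ (t/2) = |x| ^ t := by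
  rw [← sq_abs, ← Real.rpow_natCast |x| 2, ← Real.rpow_mul (abs_nonneg x)]
  congr 1 <;> push_cast <;> ring

lemma pw_abs (p : ℝ) (e : Bool) {x : ℝ} (hx : x ≠ 0) :
    |pw p e x| = |x| ^ (2*p + (cond e 1 0 : ℝ)) := by
  have h1 : (x^2) ^ p = |x| ^ (2*p) := by
    rw [← sq_abs, ← Real.rpow_natCast |x| 2, ← Real.rpow_mul (abs_nonneg x)]
    congr 1 <;> push_cast <;> ring
  have h2 : |x ^ (cond e 1 0 : ℕ)| = |x| ^ ((cond e 1 0 : ℕ) : ℝ) := by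
    rw [abs_pow, Real.rpow_natCast]
  have h0 : (0:ℝ) < |x| := abs_pos.mpr hx
  rw [pw, abs_mul, abs_of_nonneg (Real.rpow_nonneg (sq_nonneg x) p)]
  rw [h1, h2, ← Real.rpow_add h0]
  cases e <;> norm_num

lemma pw_hasDerivAt (p : ℝ) (e : Bool) {x : ℝ} (hx : x ≠ 0) :
    HasDerivAt (pw p e)
      ((2*p + (cond e 1 0 : ℝ)) * pw (cond e p (p-1)) (!e) x) x := by
  have hx2 : (0:ℝ) < x^2 := by positivity
  have hsq : HasDerivAt (fun x : ℝ => x^2) (2*x) x := by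
    simpa using hasDerivAt_pow 2 x
  have h1 : HasDerivAt (fun x : ℝ => (x^2)^p) ((2*x) * p * (x^2)^(p-1)) x :=
    hsq.rpow_const (Or.inl hx2.ne')
  have key : (x^2)^(p-1) * (x^2) = (x^2)^p := by
    have := (Real.rpow_add hx2 (p-1) 1).symm
    rw [Real.rpow_one] at this
    rw [this]
    norm_num
  have h2 := h1.mul (hasDerivAt_pow (cond e 1 0) x)
  cases e
  · refine HasDerivAt.congr_deriv h2 (Eq.symm ?_)
    simp only [pw, Bool.cond_false, Bool.cond_true, Bool.not_false, pow_zero, pow_one, mul_one,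
      Nat.cast_zero, Nat.cast_one]
    push_cast
    ring
  · refine HasDerivAt.congr_deriv h2 (Eq.symm ?_)
    simp only [pw, Bool.cond_false, Bool.cond_true, Bool.not_true, pow_zero, pow_one, mul_one,
      Nat.cast_zero, Nat.cast_one]
    push_cast
    linear_combination (-2*p) * key

structure Term where
  β : ℝ
  p : ℝ
  e : Bool
  q : ℝ
  f : Bool
  a : ℕ
  b : ℕ

variable (m : ℝ × ℝ → ℂ)

noncomputable def tval (T : Term) (ξ : ℝ × ℝ) : ℂ :=
  ((T.β * pw T.p T.e (ξ.1 + ξ.2) * pw T.q T.f ξ.2 : ℝ) : ℂ) * (pd1^[T.a] (pd2^[T.b] m)) ξ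

def U : Set (ℝ × ℝ) := {ξ | ξ.2 ≠ 0 ∧ ξ.1 + ξ.2 ≠ 0}

lemma isOpen_U : IsOpen U := by
  have h1 : IsOpen {ξ : ℝ × ℝ | ξ.2 ≠ 0} :=
    isOpen_compl_singleton.preimage continuous_snd
  have h2 : IsOpen {ξ : ℝ × ℝ | ξ.1 + ξ.2 ≠ 0} :=
    isOpen_compl_singleton.preimage (continuous_fst.add continuous_snd)
  exact h1.inter h2

def Term.ok (n : ℕ) (T : Term) : Prop :=
  2*T.q + (cond T.f 1 0 : ℝ) ≤ 0 ∧
  (2*T.p + (cond T.e 1 0 : ℝ)) + (2*T.q + (cond T.f 1 0 : ℝ)) = (T.a + T.b : ℝ) - n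

def dT1 (T : Term) : List Term :=
  [⟨T.β * (2*T.p + (cond T.e 1 0 : ℝ)), cond T.e T.p (T.p - 1), !T.e, T.q, T.f, T.a, T.b⟩,
   ⟨T.β, T.p, T.e, T.q, T.f, T.a + 1, T.b⟩]

def dT2 (T : Term) : List Term :=
  [⟨T.β * (2*T.p + (cond T.e 1 0 : ℝ)), cond T.e T.p (T.p - 1), !T.e, T.q, T.f, T.a, T.b⟩,
   ⟨T.β * (2*T.q + (cond T.f 1 0 : ℝ)), T.p, T.e, cond T.f T.q (T.q - 1), !T.f, T.a, T.b⟩,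
   ⟨T.β, T.p, T.e, T.q, T.f, T.a, T.b + 1⟩]

lemma hom_drop (p : ℝ) (e : Bool) :
    2*(cond e p (p-1)) + (cond (!e) 1 0 : ℝ) = (2*p + (cond e 1 0 : ℝ)) - 1 := by
  cases e <;> simp <;> ring

lemma dT1_ok {n : ℕ} {T : Term} (h : T.ok n) : ∀ T' ∈ dT1 T, T'.ok (n+1) := by
  obtain ⟨h1, h2⟩ := h
  intro T' hT'
  simp only [dT1, List.mem_cons, List.not_mem_nil, or_false] at hT'
  rcases hT' with rfl | rfl
  · exact ⟨h1, by simp only [hom_drop]; push_cast; push_cast at h2; linarith⟩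
  · refine ⟨h1, ?_⟩
    push_cast; push_cast at h2; linarith

lemma dT2_ok {n : ℕ} {T : Term} (h : T.ok n) : ∀ T' ∈ dT2 T, T'.ok (n+1) ∧ T'.a = T.a := by
  obtain ⟨h1, h2⟩ := h
  intro T' hT'
  simp only [dT2, List.mem_cons, List.not_mem_nil, or_false] at hT'
  rcases hT' with rfl | rfl | rfl
  · exact ⟨⟨h1, by simp only [hom_drop]; push_cast; push_cast at h2; linarith⟩, rfl⟩
  · refine ⟨⟨?_, ?_⟩, rfl⟩
    · simp only [hom_drop]; linarith
    · simp only [hom_drop]; push_cast; push_cast at h2; linarith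
  · refine ⟨⟨h1, ?_⟩, rfl⟩
    push_cast; push_cast at h2; linarith

lemma hasDerivAt_list_sum {α : Type*} (L : List α) (g : α → ℝ → ℂ) (g' : α → ℂ) (x : ℝ)
    (h : ∀ a ∈ L, HasDerivAt (g a) (g' a) x) :
    HasDerivAt (fun t => (L.map (fun a => g a t)).sum) ((L.map g').sum) x := by
  induction L with
  | nil => simpa using hasDerivAt_const x (0:ℂ)
  | cons a l ih =>
      simp only [List.map_cons, List.sum_cons]
      exact (h a (by simp)).add (ih fun b hb => h b (List.mem_cons_of_mem _ hb))

lemma tval_hasDerivAt1 (hm : ContDiff ℝ (⊤ : ℕ∞) m) (T : Term) {ξ : ℝ × ℝ} (hξ : ξ ∈ U) :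
    HasDerivAt (fun t => tval m T (t, ξ.2)) (((dT1 T).map (fun T' => tval m T' ξ)).sum) ξ.1 := by
  have hM : ContDiff ℝ (⊤ : ℕ∞) (pd1^[T.a] (pd2^[T.b] m)) := contDiff_pdIter hm T.a T.b
  have hMd : HasDerivAt (fun t => (pd1^[T.a] (pd2^[T.b] m)) (t, ξ.2))
      (pd1 (pd1^[T.a] (pd2^[T.b] m)) ξ) ξ.1 :=
    pd1_hasDerivAt ((hM.differentiable (by simp)) ξ)
  have hu : HasDerivAt (fun t => pw T.p T.e (t + ξ.2))
      ((2*T.p + (cond T.e 1 0 : ℝ)) * pw (cond T.e T.p (T.p - 1)) (!T.e) (ξ.1 + ξ.2)) ξ.1 := by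
    have := (pw_hasDerivAt T.p T.e hξ.2).comp ξ.1 ((hasDerivAt_id ξ.1).add_const ξ.2)
    simpa [Function.comp_def] using this
  have hg := (hu.const_mul T.β).mul_const (pw T.q T.f ξ.2)
  have hgc := Complex.ofRealCLM.hasFDerivAt.comp_hasDerivAt ξ.1 hg
  have hprod := hgc.mul hMd
  have : (fun t => tval m T (t, ξ.2)) = fun t =>
      (Complex.ofRealCLM ∘ fun t => T.β * pw T.p T.e (t + ξ.2) * pw T.q T.f ξ.2) t *
        (pd1^[T.a] (pd2^[T.b] m)) (t, ξ.2) := by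
    funext t
    simp [tval, Complex.ofRealCLM_apply, mul_comm, mul_assoc]
  rw [this]
  refine HasDerivAt.congr_deriv hprod (Eq.symm ?_)
  have hsucc : (pd1^[T.a + 1] (pd2^[T.b] m)) ξ = pd1 (pd1^[T.a] (pd2^[T.b] m)) ξ := by
    rw [Function.iterate_succ_apply']
  simp only [dT1, List.map_cons, List.map_nil, List.sum_cons, List.sum_nil, tval,
    Complex.ofRealCLM_apply, Function.comp, hsucc, add_zero]
  push_cast
  ring

lemma tval_hasDerivAt2 (hm : ContDiff ℝ (⊤ : ℕ∞) m) (T : Term) (ha : T.a = 0) {ξ : ℝ × ℝ} (hξ : ξ ∈ U) :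
    HasDerivAt (fun t => tval m T (ξ.1, t)) (((dT2 T).map (fun T' => tval m T' ξ)).sum) ξ.2 := by
  have hM : ContDiff ℝ (⊤ : ℕ∞) (pd2^[T.b] m) := by
    have := contDiff_pdIter hm 0 T.b
    simpa using this
  have hMd : HasDerivAt (fun t => (pd2^[T.b] m) (ξ.1, t)) (pd2 (pd2^[T.b] m) ξ) ξ.2 :=
    pd2_hasDerivAt ((hM.differentiable (by simp)) ξ)
  have hu : HasDerivAt (fun t => pw T.p T.e (ξ.1 + t))
      ((2*T.p + (cond T.e 1 0 : ℝ)) * pw (cond T.e T.p (T.p - 1)) (!T.e) (ξ.1 + ξ.2)) ξ.2 := by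
    have := (pw_hasDerivAt T.p T.e hξ.2).comp ξ.2 ((hasDerivAt_id ξ.2).const_add ξ.1)
    simpa [Function.comp_def] using this
  have hv : HasDerivAt (fun t => pw T.q T.f t)
      ((2*T.q + (cond T.f 1 0 : ℝ)) * pw (cond T.f T.q (T.q - 1)) (!T.f) ξ.2) ξ.2 :=
    pw_hasDerivAt T.q T.f hξ.1
  have hg := (hu.const_mul T.β).mul hv
  have hgc := Complex.ofRealCLM.hasFDerivAt.comp_hasDerivAt ξ.2 hg
  have hprod := hgc.mul hMd
  have heq : (fun t => tval m T (ξ.1, t)) = fun t =>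
      (Complex.ofRealCLM ∘ fun t => T.β * pw T.p T.e (ξ.1 + t) * pw T.q T.f t) t *
        (pd2^[T.b] m) (ξ.1, t) := by
    funext t
    simp [tval, ha, Complex.ofRealCLM_apply]
  rw [heq]
  refine HasDerivAt.congr_deriv hprod (Eq.symm ?_)
  have hsucc : (pd2^[T.b + 1] m) ξ = pd2 (pd2^[T.b] m) ξ := by
    rw [Function.iterate_succ_apply']
  simp only [dT2, List.map_cons, List.map_nil, List.sum_cons, List.sum_nil, tval, ha,
    Complex.ofRealCLM_apply, Function.comp, hsucc, add_zero, Function.iterate_zero, id, Pi.mul_apply]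
  push_cast
  ring

lemma list_sum_bind {α β : Type*} (L : List α) (f : α → List β) (g : β → ℂ) :
    ((L.flatMap f).map g).sum = (L.map (fun a => ((f a).map g).sum)).sum := by
  induction L with
  | nil => simp
  | cons a l ih => simp [List.flatMap_cons, ih]

def Rep (n : ℕ) (F : ℝ × ℝ → ℂ) : Prop :=
  ∃ L : List Term, (∀ T ∈ L, T.ok n) ∧ ∀ ξ ∈ U, F ξ = (L.map (fun T => tval m T ξ)).sum

def Rep2 (n : ℕ) (F : ℝ × ℝ → ℂ) : Prop :=
  ∃ L : List Term, (∀ T ∈ L, T.ok n ∧ T.a = 0) ∧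
    ∀ ξ ∈ U, F ξ = (L.map (fun T => tval m T ξ)).sum

lemma eventually_mem_U1 {ξ : ℝ × ℝ} (hξ : ξ ∈ U) :
    ∀ᶠ t in nhds ξ.1, ((t, ξ.2) : ℝ × ℝ) ∈ U := by
  have hc : Continuous (fun t : ℝ => ((t, ξ.2) : ℝ × ℝ)) := by continuity
  have := (isOpen_U.preimage hc).mem_nhds (show (ξ.1, ξ.2) ∈ U by simpa using hξ)
  exact Filter.eventually_of_mem this fun t ht => ht

lemma eventually_mem_U2 {ξ : ℝ × ℝ} (hξ : ξ ∈ U) :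
    ∀ᶠ t in nhds ξ.2, ((ξ.1, t) : ℝ × ℝ) ∈ U := by
  have hc : Continuous (fun t : ℝ => ((ξ.1, t) : ℝ × ℝ)) := by continuity
  have := (isOpen_U.preimage hc).mem_nhds (show (ξ.1, ξ.2) ∈ U by simpa using hξ)
  exact Filter.eventually_of_mem this fun t ht => ht

lemma rep_pd1 (hm : ContDiff ℝ (⊤ : ℕ∞) m) {n : ℕ} {F : ℝ × ℝ → ℂ} (h : Rep m n F) :
    Rep m (n+1) (pd1 F) := by
  obtain ⟨L, hok, hval⟩ := h
  refine ⟨L.flatMap dT1, ?_, ?_⟩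
  · intro T' hT'
    rw [List.mem_flatMap] at hT'
    obtain ⟨T, hT, hT'⟩ := hT'
    exact dT1_ok (hok T hT) T' hT'
  · intro ξ hξ
    have hev : (fun t => F (t, ξ.2)) =ᶠ[nhds ξ.1]
        (fun t => (L.map (fun T => tval m T (t, ξ.2))).sum) :=
      (eventually_mem_U1 hξ).mono fun t ht => hval _ ht
    have hD := hasDerivAt_list_sum L (fun T t => tval m T (t, ξ.2))
      (fun T => ((dT1 T).map (fun T' => tval m T' ξ)).sum) ξ.1
      (fun T _ => tval_hasDerivAt1 m hm T hξ)
    calc pd1 F ξ = deriv (fun t => F (t, ξ.2)) ξ.1 := rfl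
    _ = deriv (fun t => (L.map (fun T => tval m T (t, ξ.2))).sum) ξ.1 := hev.deriv_eq
    _ = (L.map (fun T => ((dT1 T).map (fun T' => tval m T' ξ)).sum)).sum := hD.deriv
    _ = ((L.flatMap dT1).map (fun T => tval m T ξ)).sum := (list_sum_bind L dT1 _).symm

lemma rep2_pd2 (hm : ContDiff ℝ (⊤ : ℕ∞) m) {n : ℕ} {F : ℝ × ℝ → ℂ} (h : Rep2 m n F) :
    Rep2 m (n+1) (pd2 F) := by
  obtain ⟨L, hok, hval⟩ := h
  refine ⟨L.flatMap dT2, ?_, ?_⟩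
  · intro T' hT'
    rw [List.mem_flatMap] at hT'
    obtain ⟨T, hT, hT'⟩ := hT'
    have := dT2_ok (hok T hT).1 T' hT'
    exact ⟨this.1, this.2.trans (hok T hT).2⟩
  · intro ξ hξ
    have hev : (fun t => F (ξ.1, t)) =ᶠ[nhds ξ.2]
        (fun t => (L.map (fun T => tval m T (ξ.1, t))).sum) :=
      (eventually_mem_U2 hξ).mono fun t ht => hval _ ht
    have hD := hasDerivAt_list_sum L (fun T t => tval m T (ξ.1, t))
      (fun T => ((dT2 T).map (fun T' => tval m T' ξ)).sum) ξ.2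
      (fun T hT => tval_hasDerivAt2 m hm T (hok T hT).2 hξ)
    calc pd2 F ξ = deriv (fun t => F (ξ.1, t)) ξ.2 := rfl
    _ = deriv (fun t => (L.map (fun T => tval m T (ξ.1, t))).sum) ξ.2 := hev.deriv_eq
    _ = (L.map (fun T => ((dT2 T).map (fun T' => tval m T' ξ)).sum)).sum := hD.deriv
    _ = ((L.flatMap dT2).map (fun T => tval m T ξ)).sum := (list_sum_bind L dT2 _).symm

lemma rep2_rep {n : ℕ} {F : ℝ × ℝ → ℂ} (h : Rep2 m n F) : Rep m n F := by
  obtain ⟨L, hok, hval⟩ := h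
  exact ⟨L, fun T hT => (hok T hT).1, hval⟩

noncomputable def mtilde (s : ℝ) : ℝ × ℝ → ℂ := fun ξ =>
  if ξ.2 ≠ 0 ∧ ξ.1 + ξ.2 ≠ 0 then
    ((|ξ.1 + ξ.2| ^ s * |ξ.2| ^ (-s) : ℝ) : ℂ) * m ξ
  else 0

lemma mtilde_eq_on_U {s : ℝ} {ξ : ℝ × ℝ} (hξ : ξ ∈ U) :
    mtilde m s ξ = ((pw (s/2) false (ξ.1 + ξ.2) * pw (-(s/2)) false ξ.2 : ℝ) : ℂ) * m ξ := by
  have h1 : pw (s/2) false (ξ.1 + ξ.2) = |ξ.1 + ξ.2| ^ s := by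
    rw [pw]; simp [sq_rpow_eq_abs]
  have h2 : pw (-(s/2)) false ξ.2 = |ξ.2| ^ (-s) := by
    rw [pw]; simp [show -(s/2) = (-s)/2 by ring, sq_rpow_eq_abs]
  obtain ⟨ha, hb⟩ := hξ
  rw [mtilde]
  rw [if_pos (⟨ha, hb⟩ : ξ.2 ≠ 0 ∧ ξ.1 + ξ.2 ≠ 0), h1, h2]

lemma rep2_base {s : ℝ} (hs : 0 ≤ s) : Rep2 m 0 (mtilde m s) := by
  refine ⟨[⟨1, s/2, false, -(s/2), false, 0, 0⟩], ?_, ?_⟩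
  · intro T hT
    simp only [List.mem_cons, List.not_mem_nil, or_false] at hT
    subst hT
    refine ⟨⟨?_, ?_⟩, rfl⟩
    · simp only [Bool.cond_false]; push_cast; linarith
    · simp only [Bool.cond_false]; push_cast; ring
  · intro ξ hξ
    rw [mtilde_eq_on_U m hξ]
    simp [tval, Complex.ofReal_mul]

def K (c : ℝ) : Set (ℝ × ℝ) :=
  {ξ | c * (|ξ.1| + |ξ.2|) ≤ |ξ.2| ∧ c * (|ξ.1| + |ξ.2|) ≤ |ξ.1 + ξ.2| ∧
    1/8 ≤ |ξ.1| + |ξ.2|}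

lemma isClosed_K (c : ℝ) : IsClosed (K c) := by
  have h1 : IsClosed {ξ : ℝ × ℝ | c * (|ξ.1| + |ξ.2|) ≤ |ξ.2|} :=
    isClosed_le (by continuity) (by continuity)
  have h2 : IsClosed {ξ : ℝ × ℝ | c * (|ξ.1| + |ξ.2|) ≤ |ξ.1 + ξ.2|} :=
    isClosed_le (by continuity) (by continuity)
  have h3 : IsClosed {ξ : ℝ × ℝ | 1/8 ≤ |ξ.1| + |ξ.2|} :=
    isClosed_le (by continuity) (by continuity)
  exact (h1.inter (h2.inter h3) : _)

lemma pd1_zero_on {F : ℝ × ℝ → ℂ} {V : Set (ℝ × ℝ)} (hV : IsOpen V)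
    (h : ∀ ξ ∈ V, F ξ = 0) : ∀ ξ ∈ V, pd1 F ξ = 0 := by
  intro ξ hξ
  have hc : Continuous (fun t : ℝ => ((t, ξ.2) : ℝ × ℝ)) := by continuity
  have hmem := (hV.preimage hc).mem_nhds (show (ξ.1, ξ.2) ∈ V by simpa using hξ)
  have hev : (fun t => F (t, ξ.2)) =ᶠ[nhds ξ.1] (fun _ => (0:ℂ)) :=
    Filter.eventually_of_mem hmem fun t ht => h _ ht
  show deriv (fun t => F (t, ξ.2)) ξ.1 = 0
  rw [hev.deriv_eq, deriv_const]

lemma pd2_zero_on {F : ℝ × ℝ → ℂ} {V : Set (ℝ × ℝ)} (hV : IsOpen V)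
    (h : ∀ ξ ∈ V, F ξ = 0) : ∀ ξ ∈ V, pd2 F ξ = 0 := by
  intro ξ hξ
  have hc : Continuous (fun t : ℝ => ((ξ.1, t) : ℝ × ℝ)) := by continuity
  have hmem := (hV.preimage hc).mem_nhds (show (ξ.1, ξ.2) ∈ V by simpa using hξ)
  have hev : (fun t => F (ξ.1, t)) =ᶠ[nhds ξ.2] (fun _ => (0:ℂ)) :=
    Filter.eventually_of_mem hmem fun t ht => h _ ht
  show deriv (fun t => F (ξ.1, t)) ξ.2 = 0
  rw [hev.deriv_eq, deriv_const]

lemma pdIter_zero_on {F : ℝ × ℝ → ℂ} {V : Set (ℝ × ℝ)} (hV : IsOpen V)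
    (h : ∀ ξ ∈ V, F ξ = 0) (a b : ℕ) : ∀ ξ ∈ V, (pd1^[a] (pd2^[b] F)) ξ = 0 := by
  have hb : ∀ ξ ∈ V, (pd2^[b] F) ξ = 0 := by
    induction b with
    | zero => simpa using h
    | succ b ih =>
        intro ξ hξ
        rw [Function.iterate_succ_apply']
        exact pd2_zero_on hV ih ξ hξ
  induction a with
  | zero => simpa using hb
  | succ a ih =>
      intro ξ hξ
      rw [Function.iterate_succ_apply']
      exact pd1_zero_on hV ih ξ hξ

lemma tval_bound {c : ℝ} (hc0 : 0 < c) {n : ℕ} {T : Term} (hok : T.ok n)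
    {Cm : ℝ} (hCm : ∀ ξ : ℝ × ℝ, ξ ≠ (0, 0) →
      ‖(pd1^[T.a] (pd2^[T.b] m)) ξ‖ ≤ Cm * (|ξ.1| + |ξ.2|) ^ (-((T.a : ℝ) + (T.b : ℝ)))) :
    ∃ D : ℝ, 0 ≤ D ∧ ∀ ξ : ℝ × ℝ, ξ ≠ (0, 0) →
      c * (|ξ.1| + |ξ.2|) ≤ |ξ.2| → c * (|ξ.1| + |ξ.2|) ≤ |ξ.1 + ξ.2| →
      ‖tval m T ξ‖ ≤ D * (|ξ.1| + |ξ.2|) ^ (-(n : ℝ)) := by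
  set t : ℝ := 2*T.p + (cond T.e 1 0 : ℝ) with ht
  set rq : ℝ := 2*T.q + (cond T.f 1 0 : ℝ) with hrq
  refine ⟨|T.β| * (max 1 (c ^ t)) * (c ^ rq) * (max Cm 0), by positivity, ?_⟩
  intro ξ hne h2 hu
  have hr : 0 < |ξ.1| + |ξ.2| := by
    rcases lt_or_eq_of_le (add_nonneg (abs_nonneg ξ.1) (abs_nonneg ξ.2)) with h | h
    · exact h
    · exfalso
      apply hne
      have h1 : |ξ.1| = 0 := by cases abs_nonneg ξ.1 |>.lt_or_eq with
        | inl hlt => nlinarith [abs_nonneg ξ.2]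
        | inr heq => exact heq.symm
      have h2' : |ξ.2| = 0 := by linarith [abs_nonneg ξ.1, abs_nonneg ξ.2]
      exact Prod.ext (abs_eq_zero.mp h1) (abs_eq_zero.mp h2')
  set r : ℝ := |ξ.1| + |ξ.2| with hrdef
  have hcr : 0 < c * r := by positivity
  have hv0 : ξ.2 ≠ 0 := by
    intro h; rw [h] at h2; simp at h2; nlinarith
  have hu0 : ξ.1 + ξ.2 ≠ 0 := by
    intro h; rw [h] at hu; simp at hu; nlinarith
  have hnorm : ‖tval m T ξ‖ = |T.β| * |ξ.1 + ξ.2| ^ t * |ξ.2| ^ rq *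
      ‖(pd1^[T.a] (pd2^[T.b] m)) ξ‖ := by
    rw [tval, norm_mul, Complex.norm_real, Real.norm_eq_abs, abs_mul, abs_mul,
      pw_abs _ _ hu0, pw_abs _ _ hv0]
  have bound1 : |ξ.1 + ξ.2| ^ t ≤ max 1 (c ^ t) * r ^ t := by
    rcases le_or_gt 0 t with h | h
    · calc |ξ.1 + ξ.2| ^ t ≤ r ^ t :=
            Real.rpow_le_rpow (abs_nonneg _) (abs_add_le ξ.1 ξ.2) h
      _ ≤ max 1 (c ^ t) * r ^ t :=
            le_mul_of_one_le_left (Real.rpow_nonneg hr.le t) (le_max_left _ _)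
    · calc |ξ.1 + ξ.2| ^ t ≤ (c * r) ^ t :=
            Real.rpow_le_rpow_of_nonpos hcr hu h.le
      _ = c ^ t * r ^ t := Real.mul_rpow hc0.le hr.le
      _ ≤ max 1 (c ^ t) * r ^ t :=
            mul_le_mul_of_nonneg_right (le_max_right _ _) (Real.rpow_nonneg hr.le t)
  have bound2 : |ξ.2| ^ rq ≤ c ^ rq * r ^ rq := by
    calc |ξ.2| ^ rq ≤ (c * r) ^ rq := Real.rpow_le_rpow_of_nonpos hcr h2 hok.1
    _ = c ^ rq * r ^ rq := Real.mul_rpow hc0.le hr.le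
  have bound3 : ‖(pd1^[T.a] (pd2^[T.b] m)) ξ‖ ≤ max Cm 0 * r ^ (-((T.a : ℝ) + (T.b : ℝ))) :=
    le_trans (hCm ξ hne) (mul_le_mul_of_nonneg_right (le_max_left _ _)
      (Real.rpow_nonneg hr.le _))
  have hexp : r ^ t * r ^ rq * r ^ (-((T.a : ℝ) + (T.b : ℝ))) = r ^ (-(n : ℝ)) := by
    rw [← Real.rpow_add hr, ← Real.rpow_add hr]
    congr 1
    have := hok.2
    rw [← ht, ← hrq] at this
    linarith
  calc ‖tval m T ξ‖ = |T.β| * |ξ.1 + ξ.2| ^ t * |ξ.2| ^ rq *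
      ‖(pd1^[T.a] (pd2^[T.b] m)) ξ‖ := hnorm
  _ ≤ |T.β| * (max 1 (c ^ t) * r ^ t) * (c ^ rq * r ^ rq) *
      (max Cm 0 * r ^ (-((T.a : ℝ) + (T.b : ℝ)))) := by
      gcongr <;> first
        | exact bound1 | exact bound2 | exact bound3 | positivity | exact abs_nonneg _
  _ = |T.β| * (max 1 (c ^ t)) * (c ^ rq) * (max Cm 0) *
      (r ^ t * r ^ rq * r ^ (-((T.a : ℝ) + (T.b : ℝ)))) := by ring
  _ = |T.β| * (max 1 (c ^ t)) * (c ^ rq) * (max Cm 0) * r ^ (-(n : ℝ)) := by rw [hexp]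

lemma list_bound {c : ℝ} (hc0 : 0 < c) (L : List Term) {n : ℕ} (hok : ∀ T ∈ L, T.ok n)
    (hCM : ∀ a b : ℕ, ∃ C : ℝ, ∀ ξ : ℝ × ℝ, ξ ≠ (0, 0) →
      ‖(pd1^[a] (pd2^[b] m)) ξ‖ ≤ C * (|ξ.1| + |ξ.2|) ^ (-((a : ℝ) + (b : ℝ)))) :
    ∃ C' : ℝ, 0 ≤ C' ∧ ∀ ξ : ℝ × ℝ, ξ ≠ (0, 0) →
      c * (|ξ.1| + |ξ.2|) ≤ |ξ.2| → c * (|ξ.1| + |ξ.2|) ≤ |ξ.1 + ξ.2| →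
      ‖(L.map (fun T => tval m T ξ)).sum‖ ≤ C' * (|ξ.1| + |ξ.2|) ^ (-(n : ℝ)) := by
  induction L with
  | nil =>
      refine ⟨0, le_rfl, ?_⟩
      intro ξ _ _ _
      simp
  | cons T l ih =>
      obtain ⟨Cm, hCm⟩ := hCM T.a T.b
      obtain ⟨D, hD0, hD⟩ := tval_bound m hc0 (hok T (by simp)) hCm
      obtain ⟨C', hC'0, hC'⟩ := ih fun T' hT' => hok T' (List.mem_cons_of_mem _ hT')
      refine ⟨D + C', by linarith, ?_⟩
      intro ξ hne h2 hu
      simp only [List.map_cons, List.sum_cons]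
      refine le_trans (norm_add_le _ _) ?_
      rw [add_mul]
      exact add_le_add (hD ξ hne h2 hu) (hC' ξ hne h2 hu)

lemma rep_iter (hm : ContDiff ℝ (⊤ : ℕ∞) m) {s : ℝ} (hs : 0 ≤ s) (a b : ℕ) :
    Rep m (a + b) (pd1^[a] (pd2^[b] (mtilde m s))) := by
  have h2 : ∀ b : ℕ, Rep2 m b (pd2^[b] (mtilde m s)) := by
    intro b
    induction b with
    | zero => simpa using rep2_base m hs
    | succ b ih =>
        rw [Function.iterate_succ_apply']
        exact rep2_pd2 m hm ih
  induction a with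
  | zero => simpa using rep2_rep m (h2 b)
  | succ a ih =>
      rw [Function.iterate_succ_apply']
      have := rep_pd1 m hm ih
      have hnat : a + b + 1 = a + 1 + b := by omega
      rwa [hnat] at this

lemma K_subset_U {c : ℝ} (hc0 : 0 < c) : K c ⊆ U := by
  intro ξ hξ
  obtain ⟨h1, h2, h3⟩ := hξ
  have hr : (0:ℝ) < |ξ.1| + |ξ.2| := lt_of_lt_of_le (by norm_num) h3
  constructor
  · intro h
    have hz : |ξ.2| = 0 := by rw [h]; exact abs_zero
    rw [h] at h1; simp at h1
    nlinarith [abs_nonneg ξ.1]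
  · intro h
    rw [h] at h2; simp at h2
    nlinarith

lemma mtilde_zero_off {c s : ℝ}
    (hsupp : ∀ ξ : ℝ × ℝ,
      ¬(c * (|ξ.1| + |ξ.2|) ≤ |ξ.2| ∧ c * (|ξ.1| + |ξ.2|) ≤ |ξ.1 + ξ.2| ∧
          1 / 8 ≤ |ξ.1| + |ξ.2|) → m ξ = 0) :
    ∀ ξ ∈ (K c)ᶜ, mtilde m s ξ = 0 := by
  intro ξ hξ
  have hm0 : m ξ = 0 := hsupp ξ hξ
  rw [mtilde]
  split
  · rw [hm0, mul_zero]
  · rfl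

lemma mtilde_smooth {c s : ℝ} (hc0 : 0 < c) (hm : ContDiff ℝ (⊤ : ℕ∞) m)
    (hsupp : ∀ ξ : ℝ × ℝ,
      ¬(c * (|ξ.1| + |ξ.2|) ≤ |ξ.2| ∧ c * (|ξ.1| + |ξ.2|) ≤ |ξ.1 + ξ.2| ∧
          1 / 8 ≤ |ξ.1| + |ξ.2|) → m ξ = 0) :
    ContDiff ℝ (⊤ : ℕ∞) (mtilde m s) := by
  rw [contDiff_iff_contDiffAt]
  intro x
  by_cases hx : x ∈ U
  · have hev : mtilde m s =ᶠ[nhds x] fun ξ =>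
        ((pw (s/2) false (ξ.1 + ξ.2) * pw (-(s/2)) false ξ.2 : ℝ) : ℂ) * m ξ := by
      refine Filter.eventually_of_mem (isOpen_U.mem_nhds hx) fun ξ hξ => ?_
      exact mtilde_eq_on_U m hξ
    refine ContDiffAt.congr_of_eventuallyEq ?_ hev
    have hsq1 : ContDiffAt ℝ (⊤ : ℕ∞) (fun ξ : ℝ × ℝ => (ξ.1 + ξ.2)^2) x :=
      ((contDiff_fst.add contDiff_snd).pow 2).contDiffAt
    have hsq2 : ContDiffAt ℝ (⊤ : ℕ∞) (fun ξ : ℝ × ℝ => (ξ.2)^2) x :=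
      (contDiff_snd.pow 2).contDiffAt
    have h1 : ContDiffAt ℝ (⊤ : ℕ∞) (fun ξ : ℝ × ℝ => ((ξ.1 + ξ.2)^2) ^ (s/2)) x :=
      ((Real.contDiffAt_rpow_const_of_ne (p := s/2) (pow_ne_zero 2 hx.2)).comp x hsq1 :)
    have h2 : ContDiffAt ℝ (⊤ : ℕ∞) (fun ξ : ℝ × ℝ => ((ξ.2)^2) ^ (-(s/2))) x :=
      ((Real.contDiffAt_rpow_const_of_ne (p := -(s/2)) (pow_ne_zero 2 hx.1)).comp x hsq2 :)
    have hreal : ContDiffAt ℝ (⊤ : ℕ∞)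
        (fun ξ : ℝ × ℝ => pw (s/2) false (ξ.1 + ξ.2) * pw (-(s/2)) false ξ.2) x := by
      have := h1.mul h2
      refine this.congr_of_eventuallyEq (Filter.Eventually.of_forall fun ξ => ?_)
      simp [pw]
    have hcast : ContDiffAt ℝ (⊤ : ℕ∞)
        (fun ξ : ℝ × ℝ => ((pw (s/2) false (ξ.1 + ξ.2) * pw (-(s/2)) false ξ.2 : ℝ) : ℂ)) x := by
      have := (Complex.ofRealCLM.contDiff (n := ((⊤ : ℕ∞) : WithTop ℕ∞))).contDiffAt.comp x hreal
      refine this.congr_of_eventuallyEq (Filter.Eventually.of_forall fun ξ => ?_)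
      simp [Function.comp, Complex.ofReal_mul]
    exact hcast.mul hm.contDiffAt
  · have hxK : x ∈ (K c)ᶜ := fun hK => hx (K_subset_U hc0 hK)
    have hev : mtilde m s =ᶠ[nhds x] fun _ => (0:ℂ) :=
      Filter.eventually_of_mem ((isClosed_K c).isOpen_compl.mem_nhds hxK)
        fun ξ hξ => mtilde_zero_off m hsupp ξ hξ
    exact contDiffAt_const.congr_of_eventuallyEq hev

end Stmt16

/-- if `m` is a smooth Coifman–Meyer symbol supported in the
low-high region `{|ξ₂| ≥ c(|ξ₁|+|ξ₂|), |ξ₁+ξ₂| ≥ c(|ξ₁|+|ξ₂|), |ξ₁|+|ξ₂| ≥ 1/8}`,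
then `m̃(ξ₁,ξ₂) = |ξ₁+ξ₂|^s |ξ₂|^{−s} m(ξ₁,ξ₂)` (extended by `0`) is again a
smooth Coifman–Meyer symbol. -/
theorem stmt_16 (c : ℝ) (hc0 : 0 < c) (hc1 : c ≤ 1) (s : ℝ) (hs : 0 ≤ s)
    (m : ℝ × ℝ → ℂ) (hsmooth : ContDiff ℝ (⊤ : ℕ∞) m)
    (hsupp : ∀ ξ : ℝ × ℝ,
      ¬(c * (|ξ.1| + |ξ.2|) ≤ |ξ.2| ∧ c * (|ξ.1| + |ξ.2|) ≤ |ξ.1 + ξ.2| ∧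
          1 / 8 ≤ |ξ.1| + |ξ.2|) → m ξ = 0)
    (hCM : ∀ a b : ℕ, ∃ C : ℝ, ∀ ξ : ℝ × ℝ, ξ ≠ (0, 0) →
      ‖(pd1^[a] (pd2^[b] m)) ξ‖ ≤ C * (|ξ.1| + |ξ.2|) ^ (-((a : ℝ) + (b : ℝ)))) :
    ContDiff ℝ (⊤ : ℕ∞) (fun ξ : ℝ × ℝ =>
        if ξ.2 ≠ 0 ∧ ξ.1 + ξ.2 ≠ 0 then
          ((|ξ.1 + ξ.2| ^ s * |ξ.2| ^ (-s) : ℝ) : ℂ) * m ξ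
        else 0) ∧
      ∀ a b : ℕ, ∃ C' : ℝ, ∀ ξ : ℝ × ℝ, ξ ≠ (0, 0) →
        ‖(pd1^[a] (pd2^[b] (fun ξ : ℝ × ℝ =>
            if ξ.2 ≠ 0 ∧ ξ.1 + ξ.2 ≠ 0 then
              ((|ξ.1 + ξ.2| ^ s * |ξ.2| ^ (-s) : ℝ) : ℂ) * m ξ
            else 0))) ξ‖ ≤ C' * (|ξ.1| + |ξ.2|) ^ (-((a : ℝ) + (b : ℝ))) := by
  constructor
  · exact Stmt16.mtilde_smooth m hc0 hsmooth hsupp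
  · intro a b
    obtain ⟨L, hok, hval⟩ := Stmt16.rep_iter m hsmooth hs a b
    obtain ⟨C', hC'0, hC'⟩ := Stmt16.list_bound m hc0 L hok hCM
    refine ⟨C', fun ξ hne => ?_⟩
    by_cases hK : ξ ∈ Stmt16.K c
    · have hXU := Stmt16.K_subset_U hc0 hK
      show ‖(pd1^[a] (pd2^[b] (Stmt16.mtilde m s))) ξ‖ ≤
        C' * (|ξ.1| + |ξ.2|) ^ (-((a : ℝ) + (b : ℝ)))
      rw [hval ξ hXU]
      have := hC' ξ hne hK.1 hK.2.1
      push_cast at this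
      exact this
    · have h0 := Stmt16.pdIter_zero_on (Stmt16.isClosed_K c).isOpen_compl
        (Stmt16.mtilde_zero_off m (s := s) hsupp) a b ξ hK
      show ‖(pd1^[a] (pd2^[b] (Stmt16.mtilde m s))) ξ‖ ≤
        C' * (|ξ.1| + |ξ.2|) ^ (-((a : ℝ) + (b : ℝ)))
      rw [h0, norm_zero]
      have hr : 0 ≤ |ξ.1| + |ξ.2| := add_nonneg (abs_nonneg _) (abs_nonneg _)
      exact mul_nonneg hC'0 (Real.rpow_nonneg hr _)
end

section
/- Let ω = (ω₁, ω₂) ∈ ℝ², let ν ≥ 1 and C₀ > 0 be such that |ω·n| ≥ C₀·(1 + ‖n‖)^{1−ν} for every n ∈ ℤ² with n ≠ 0, and let σ ≥ 0 and s be real numbers with s ≥ σ + ν − 1 and s ≥ σ + 1. Then there exists a constant K > 0 such that for every finitely supported u : ℤ² → ℂ: (Σ_{n∈ℤ²} (1+‖n‖²)^σ·(1+(ω·n)²)·|u(n)|²)^{1/2} + (Σ_{n∈ℤ², n≠0} (1+‖n‖²)^σ·(ω·n)^{−2}·|u(n)|²)^{1/2} ≤ K·(Σ_{n∈ℤ²}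 (1+‖n‖²)^s·|u(n)|²)^{1/2}. -/
private lemma fin_supp_summable {f : ℤ × ℤ → ℝ} (h : (Function.support f).Finite) :
    Summable f := by
  apply summable_of_ne_finset_zero (s := h.toFinset)
  intro b hb
  by_contra h'
  exact hb (h.mem_toFinset.mpr h')

private lemma sqrt_tsum_le {g f : ℤ × ℤ → ℝ} {c : ℝ} (hc : 0 ≤ c)
    (hg0 : ∀ n, 0 ≤ g n) (hf0 : ∀ n, 0 ≤ f n) (hle : ∀ n, g n ≤ c * f n)
    (hgs : Summable g) (hfs : Summable f) :
    (∑' n, g n) ^ ((1 : ℝ) / 2) ≤ Real.sqrt c * (∑' n, f n) ^ ((1 : ℝ) / 2) := by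
  have h1 : ∑' n, g n ≤ c * ∑' n, f n := by
    calc ∑' n, g n ≤ ∑' n, c * f n := Summable.tsum_le_tsum hle hgs (hfs.mul_left c)
      _ = c * ∑' n, f n := tsum_mul_left
  have h2 : (∑' n, g n) ^ ((1 : ℝ) / 2) ≤ (c * ∑' n, f n) ^ ((1 : ℝ) / 2) :=
    Real.rpow_le_rpow (tsum_nonneg hg0) h1 (by norm_num)
  calc (∑' n, g n) ^ ((1 : ℝ) / 2) ≤ (c * ∑' n, f n) ^ ((1 : ℝ) / 2) := h2
    _ = c ^ ((1 : ℝ) / 2) * (∑' n, f n) ^ ((1 : ℝ) / 2) :=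
      Real.mul_rpow hc (tsum_nonneg hf0)
    _ = Real.sqrt c * (∑' n, f n) ^ ((1 : ℝ) / 2) := by rw [Real.sqrt_eq_rpow]

/-- Lemma 9.1, on the Fourier side: if the small divisors satisfy
`|ω·n| ≥ C₀(1+‖n‖)^{1−ν}` for all nonzero `n ∈ ℤ²`, and `σ ≥ 0`, `s ≥ σ+ν−1`,
`s ≥ σ+1`, then the `Y^σ_ω` norm is controlled by the `H^s_ω` norm:
`‖⟨∇⟩^σ⟨∂_x⟩u‖_{L²} + ‖⟨∇⟩^σ∂_x^{−1}u‖_{L²} ≤ K ‖u‖_{H^s}`. -/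
theorem stmt_19 (ω : ℝ × ℝ) (ν : ℝ) (hν : 1 ≤ ν) (C₀ : ℝ) (hC₀ : 0 < C₀)
    (hdio : ∀ n : ℤ × ℤ, n ≠ 0 →
      C₀ * (1 + Real.sqrt ((n.1 : ℝ) ^ 2 + (n.2 : ℝ) ^ 2)) ^ (1 - ν) ≤
        |ω.1 * (n.1 : ℝ) + ω.2 * (n.2 : ℝ)|)
    (σ s : ℝ) (hσ : 0 ≤ σ) (hs₁ : σ + ν - 1 ≤ s) (hs₂ : σ + 1 ≤ s) :
    ∃ K : ℝ, 0 < K ∧ ∀ u : ℤ × ℤ → ℂ, (Function.support u).Finite →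
      (∑' n : ℤ × ℤ,
          (1 + ((n.1 : ℝ) ^ 2 + (n.2 : ℝ) ^ 2)) ^ σ *
            (1 + (ω.1 * (n.1 : ℝ) + ω.2 * (n.2 : ℝ)) ^ 2) * ‖u n‖ ^ 2) ^ ((1 : ℝ) / 2) +
        (∑' n : ℤ × ℤ,
            (if n ≠ 0 then
              (1 + ((n.1 : ℝ) ^ 2 + (n.2 : ℝ) ^ 2)) ^ σ *
                ((ω.1 * (n.1 : ℝ) + ω.2 * (n.2 : ℝ)) ^ 2)⁻¹ * ‖u n‖ ^ 2
            else 0)) ^ ((1 : ℝ) / 2) ≤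
        K * (∑' n : ℤ × ℤ,
            (1 + ((n.1 : ℝ) ^ 2 + (n.2 : ℝ) ^ 2)) ^ s * ‖u n‖ ^ 2) ^ ((1 : ℝ) / 2) := by
  set K₁ : ℝ := 1 + (ω.1 ^ 2 + ω.2 ^ 2) with hK₁def
  set K₂ : ℝ := C₀⁻¹ ^ 2 * (2 : ℝ) ^ (ν - 1) with hK₂def
  have hK₁ : 0 < K₁ := by positivity
  have hK₂ : 0 < K₂ := by positivity
  refine ⟨Real.sqrt K₁ + Real.sqrt K₂, by positivity, ?_⟩
  intro u hu
  set f : ℤ × ℤ → ℝ := fun n =>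
    (1 + ((n.1 : ℝ) ^ 2 + (n.2 : ℝ) ^ 2)) ^ s * ‖u n‖ ^ 2 with hfdef
  set g₁ : ℤ × ℤ → ℝ := fun n =>
    (1 + ((n.1 : ℝ) ^ 2 + (n.2 : ℝ) ^ 2)) ^ σ *
      (1 + (ω.1 * (n.1 : ℝ) + ω.2 * (n.2 : ℝ)) ^ 2) * ‖u n‖ ^ 2 with hg₁def
  set g₂ : ℤ × ℤ → ℝ := fun n =>
    (if n ≠ 0 then
      (1 + ((n.1 : ℝ) ^ 2 + (n.2 : ℝ) ^ 2)) ^ σ *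
        ((ω.1 * (n.1 : ℝ) + ω.2 * (n.2 : ℝ)) ^ 2)⁻¹ * ‖u n‖ ^ 2
    else 0) with hg₂def
  have hf0 : ∀ n, 0 ≤ f n := fun n => by positivity
  have hg₁0 : ∀ n, 0 ≤ g₁ n := fun n => by positivity
  have hg₂0 : ∀ n, 0 ≤ g₂ n := fun n => by
    simp only [hg₂def]; split <;> positivity
  have hzero : ∀ (h : ℤ × ℤ → ℝ), (∀ n, u n = 0 → h n = 0) → Summable h := by
    intro h hh
    exact fin_supp_summable (hu.subset fun n hn => by
      simp only [Function.mem_support] at hn ⊢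
      intro h0; exact hn (hh n h0))
  have hfs : Summable f := hzero f (fun n h0 => by simp [hfdef, h0])
  have hg₁s : Summable g₁ := hzero g₁ (fun n h0 => by simp [hg₁def, h0])
  have hg₂s : Summable g₂ := hzero g₂ (fun n h0 => by simp [hg₂def, h0])
  -- pointwise bound 1
  have hb₁ : ∀ n, g₁ n ≤ K₁ * f n := by
    intro n
    set x : ℝ := (n.1 : ℝ) ^ 2 + (n.2 : ℝ) ^ 2 with hxdef
    have hx : 0 ≤ x := by positivity
    set L : ℝ := ω.1 * (n.1 : ℝ) + ω.2 * (n.2 : ℝ) with hLdef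
    have hL : 1 + L ^ 2 ≤ K₁ * (1 + x) := by
      have hcs : L ^ 2 ≤ (ω.1 ^ 2 + ω.2 ^ 2) * x := by
        rw [hLdef, hxdef]
        nlinarith [sq_nonneg (ω.1 * (n.2 : ℝ) - ω.2 * (n.1 : ℝ))]
      nlinarith [sq_nonneg ω.1, sq_nonneg ω.2]
    have hw : (1 + x) ^ σ * (1 + L ^ 2) ≤ K₁ * (1 + x) ^ s := by
      calc (1 + x) ^ σ * (1 + L ^ 2)
          ≤ (1 + x) ^ σ * (K₁ * (1 + x)) :=
            mul_le_mul_of_nonneg_left hL (Real.rpow_nonneg (by linarith) _)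
        _ = K₁ * ((1 + x) ^ σ * (1 + x) ^ (1 : ℝ)) := by rw [Real.rpow_one]; ring
        _ = K₁ * (1 + x) ^ (σ + 1) := by rw [← Real.rpow_add (by linarith)]
        _ ≤ K₁ * (1 + x) ^ s :=
            mul_le_mul_of_nonneg_left
              (Real.rpow_le_rpow_of_exponent_le (by linarith) hs₂) hK₁.le
    calc g₁ n = (1 + x) ^ σ * (1 + L ^ 2) * ‖u n‖ ^ 2 := rfl
      _ ≤ K₁ * (1 + x) ^ s * ‖u n‖ ^ 2 :=
        mul_le_mul_of_nonneg_right hw (by positivity)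
      _ = K₁ * f n := by rw [hfdef]; ring
  -- pointwise bound 2
  have hb₂ : ∀ n, g₂ n ≤ K₂ * f n := by
    intro n
    by_cases hn : n = 0
    · simp only [hg₂def, hn, ne_eq, not_true_eq_false, if_false]
      positivity
    · simp only [hg₂def, hn, ne_eq, not_false_eq_true, if_true]
      set x : ℝ := (n.1 : ℝ) ^ 2 + (n.2 : ℝ) ^ 2 with hxdef
      have hx : 0 ≤ x := by positivity
      set L : ℝ := ω.1 * (n.1 : ℝ) + ω.2 * (n.2 : ℝ) with hLdef
      set r : ℝ := Real.sqrt x with hrdef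
      have hr0 : 0 ≤ r := Real.sqrt_nonneg x
      have hr2 : r ^ 2 = x := Real.sq_sqrt hx
      have hd : C₀ * (1 + r) ^ (1 - ν) ≤ |L| := hdio n hn
      set a : ℝ := C₀ * (1 + r) ^ (1 - ν) with hadef
      have ha : 0 < a := by
        apply mul_pos hC₀
        exact Real.rpow_pos_of_pos (by linarith) _
      have hL2 : a ^ 2 ≤ L ^ 2 := by
        have := pow_le_pow_left₀ ha.le hd 2
        rwa [sq_abs] at this
      have hinv : (L ^ 2)⁻¹ ≤ (a ^ 2)⁻¹ :=
        inv_anti₀ (by positivity) hL2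
      have hsq : (1 + r) ^ (2 : ℝ) ≤ 2 * (1 + x) := by
        rw [Real.rpow_two]
        nlinarith [sq_nonneg (r - 1)]
      have hainv : (a ^ 2)⁻¹ = C₀⁻¹ ^ 2 * (1 + r) ^ (2 * (ν - 1)) := by
        have h1 : a ^ 2 = C₀ ^ 2 * (1 + r) ^ ((1 - ν) * 2) := by
          rw [hadef, mul_pow, ← Real.rpow_natCast ((1 + r) ^ (1 - ν)) 2,
            ← Real.rpow_mul (by linarith)]
          norm_num
        rw [h1, mul_inv, ← Real.rpow_neg (by linarith : (0:ℝ) ≤ 1 + r), inv_pow]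
        ring_nf
      have hpow : (1 + r) ^ (2 * (ν - 1)) ≤ 2 ^ (ν - 1) * (1 + x) ^ (ν - 1) := by
        have h1 : (1 + r) ^ (2 * (ν - 1)) = ((1 + r) ^ (2 : ℝ)) ^ (ν - 1) := by
          rw [← Real.rpow_mul (by linarith)]
        rw [h1, ← Real.mul_rpow (by norm_num) (by linarith)]
        exact Real.rpow_le_rpow (Real.rpow_nonneg (by linarith) _) hsq (by linarith)
      have key : (L ^ 2)⁻¹ ≤ K₂ * (1 + x) ^ (ν - 1) := by
        calc (L ^ 2)⁻¹ ≤ (a ^ 2)⁻¹ := hinv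
          _ = C₀⁻¹ ^ 2 * (1 + r) ^ (2 * (ν - 1)) := hainv
          _ ≤ C₀⁻¹ ^ 2 * (2 ^ (ν - 1) * (1 + x) ^ (ν - 1)) := by
              apply mul_le_mul_of_nonneg_left hpow (by positivity)
          _ = K₂ * (1 + x) ^ (ν - 1) := by rw [hK₂def]; ring
      have hw : (1 + x) ^ σ * (L ^ 2)⁻¹ ≤ K₂ * (1 + x) ^ s := by
        calc (1 + x) ^ σ * (L ^ 2)⁻¹
            ≤ (1 + x) ^ σ * (K₂ * (1 + x) ^ (ν - 1)) :=
              mul_le_mul_of_nonneg_left key (Real.rpow_nonneg (by linarith) _)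
          _ = K₂ * ((1 + x) ^ σ * (1 + x) ^ (ν - 1)) := by ring
          _ = K₂ * (1 + x) ^ (σ + (ν - 1)) := by rw [← Real.rpow_add (by linarith)]
          _ ≤ K₂ * (1 + x) ^ s :=
              mul_le_mul_of_nonneg_left
                (Real.rpow_le_rpow_of_exponent_le (by linarith) (by linarith)) hK₂.le
      calc (1 + x) ^ σ * (L ^ 2)⁻¹ * ‖u n‖ ^ 2
          ≤ K₂ * (1 + x) ^ s * ‖u n‖ ^ 2 :=
            mul_le_mul_of_nonneg_right hw (by positivity)
        _ = K₂ * f n := by rw [hfdef]; ring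
  have h1 := sqrt_tsum_le hK₁.le hg₁0 hf0 hb₁ hg₁s hfs
  have h2 := sqrt_tsum_le hK₂.le hg₂0 hf0 hb₂ hg₂s hfs
  calc (∑' n, g₁ n) ^ ((1 : ℝ) / 2) + (∑' n, g₂ n) ^ ((1 : ℝ) / 2)
      ≤ Real.sqrt K₁ * (∑' n, f n) ^ ((1 : ℝ) / 2) +
          Real.sqrt K₂ * (∑' n, f n) ^ ((1 : ℝ) / 2) := add_le_add h1 h2
    _ = (Real.sqrt K₁ + Real.sqrt K₂) * (∑' n, f n) ^ ((1 : ℝ) / 2) := by ring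
end
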